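/- arXiv:1404.5485 — 5 statements merged into one kernel-verified Lean document; each statement's English description precedes it below -/
import Mathlib

section
/- Let Θ and X be compact metric spaces. For each N, let θ_1,…,θ_N ∈ Θ and let F^N : Θ × X × P(X) → ℝ be a sequence of functions, uniformly equi-continuous on Θ × X × P(X) (P(X) endowed with the 1-Wasserstein metric), with a common modulus of continuity ω in the measure variable. Let x̄^N = (x_1^N,…,x_N^N) ∈ X^N be a Nash equilibrium of the N-player game with costs J_i^N(x_i, x_{-i}) = F^N(θ_i, x_i, (1/(N−1)) Σ_{j≠i} δ_{x_j}). Define μ^N := (1/N) Σ_{i=1}^N δ_{θ_i}, ν^N := (1/N) Σ_{i=1}^N δ_{x_i^N} and γ^N := (1/N) Σ_{i=1}^N δ_{(θ_i, x_i^N)}. Assume that (up to subsequences) μ^N ⇀ μ, ν^N ⇀ ν, γ^N ⇀ γ weakly-* and F^N → F uniformly on Θ × X × P(X). Then γ is a Cournot-Nash equilibrium for F and μ. -/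
/-!
Each player's leave-one-out empirical measure converges to `ν` in `W₁`, uniformly in the player:
partition `X` into finitely many small cells with `ν`-null boundaries; by the portmanteau theorem
the empirical masses of the cells converge, and matching mass inside each cell is a cheap coupling.
With the common modulus `ω` and the uniform convergence `F^N → F`, the Nash inequalities then say
that every `x_i^N` minimises `F(θ_i, ·, ν)` up to an error `r_N → 0`. Testing `γ^N` against the
continuous function `(F(θ, x, ν) - F(θ, y, ν))⁺` shows that its `γ`-integral vanishes, so `γ`-a.e.
`(θ, x)` beats every `y` of a countable dense set, hence every `y` by continuity. The marginals
of `γ` are identified by testing against functions of one variable.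
-/

open MeasureTheory Filter Topology Set
open scoped ENNReal NNReal

def Couplings {Θ X : Type*} [MeasurableSpace Θ] [MeasurableSpace X]
    (μ : Measure Θ) (ν : Measure X) : Set (Measure (Θ × X)) :=
  {γ | IsProbabilityMeasure γ ∧ γ.map Prod.fst = μ ∧ γ.map Prod.snd = ν}

noncomputable def transportCost {Θ X : Type*} [MeasurableSpace Θ] [MeasurableSpace X]
    (c : Θ → X → ℝ) (μ : Measure Θ) (ν : Measure X) : ℝ :=
  sInf ((fun γ => ∫ p, c p.1 p.2 ∂γ) '' Couplings μ ν)

noncomputable def W1 {X : Type*} [MeasurableSpace X] [PseudoMetricSpace X]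
    (μ ν : Measure X) : ℝ :=
  transportCost (fun x y => dist x y) μ ν

section Empirical

variable {E : Type*} [MeasurableSpace E] {N : ℕ}

noncomputable def empiricalMeasure (z : Fin N → E) : Measure E :=
  (N : ℝ≥0∞)⁻¹ • ∑ i, Measure.dirac (z i)

noncomputable def leaveOneOutMeasure (z : Fin N → E) (i : Fin N) : Measure E :=
  ((N : ℝ≥0∞) - 1)⁻¹ • ∑ j ∈ Finset.univ.erase i, Measure.dirac (z j)

lemma isProbabilityMeasure_empiricalMeasure (hN : N ≠ 0) (z : Fin N → E) :
    IsProbabilityMeasure (empiricalMeasure z) := by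
  constructor
  simp [empiricalMeasure, ENNReal.inv_mul_cancel (Nat.cast_ne_zero.2 hN)]

lemma isProbabilityMeasure_leaveOneOutMeasure (hN : 2 ≤ N) (z : Fin N → E) (i : Fin N) :
    IsProbabilityMeasure (leaveOneOutMeasure z i) := by
  constructor
  have hN' : ((N - 1 : ℕ) : ℝ≥0∞) = N - 1 := by rw [ENNReal.natCast_sub, Nat.cast_one]
  simp only [leaveOneOutMeasure, Measure.smul_apply, Measure.finsetSum_apply, measure_univ,
    Finset.sum_const, Finset.card_erase_of_mem (Finset.mem_univ i), Finset.card_univ,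
    Fintype.card_fin, nsmul_eq_mul, mul_one, smul_eq_mul, ← hN']
  exact ENNReal.inv_mul_cancel (Nat.cast_ne_zero.2 (by omega)) (ENNReal.natCast_ne_top _)

lemma empiricalMeasure_map {F : Type*} [MeasurableSpace F] [MeasurableSingletonClass E]
    [MeasurableSingletonClass F] (z : Fin N → E) {f : E → F} (hf : Measurable f) :
    (empiricalMeasure z).map f = empiricalMeasure (f ∘ z) := by
  simp only [empiricalMeasure, Measure.map_smul, ← Measure.sum_fintype,
    Measure.map_sum hf.aemeasurable, Measure.map_dirac, Function.comp_apply]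

lemma integral_empiricalMeasure [MeasurableSingletonClass E] (z : Fin N → E) (f : E → ℝ) :
    ∫ x, f x ∂empiricalMeasure z = (N : ℝ)⁻¹ * ∑ i, f (z i) := by
  rw [empiricalMeasure, integral_smul_measure,
    integral_finsetSum_measure fun i _ => integrable_dirac enorm_lt_top]
  simp [integral_dirac]

lemma leaveOneOutMeasure_le (hN : N ≠ 0) (z : Fin N → E) (i : Fin N) :
    leaveOneOutMeasure z i ≤ ((N : ℝ≥0∞) / (N - 1)) • empiricalMeasure z := by
  have hscalar : (N : ℝ≥0∞) / (N - 1) * (N : ℝ≥0∞)⁻¹ = ((N : ℝ≥0∞) - 1)⁻¹ := by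
    rw [div_eq_mul_inv, mul_right_comm, ENNReal.mul_inv_cancel (Nat.cast_ne_zero.2 hN)
      (ENNReal.natCast_ne_top N), one_mul]
  rw [empiricalMeasure, smul_smul, hscalar, leaveOneOutMeasure]
  gcongr
  · exact fun _ _ _ => Measure.zero_le _
  · exact Finset.erase_subset i _

lemma leaveOneOutMeasure_real_le (hN : 2 ≤ N) (z : Fin N → E) (i : Fin N) (A : Set E) :
    (leaveOneOutMeasure z i).real A ≤ N / (N - 1) * (empiricalMeasure z).real A := by
  have h1 : (1 : ℝ≥0∞) ≤ N := by exact_mod_cast (by omega : 1 ≤ N)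
  have hscalar : ((N : ℝ≥0∞) / (N - 1)).toReal = N / (N - 1) := by
    rw [ENNReal.toReal_div, ENNReal.toReal_sub_of_le h1 (ENNReal.natCast_ne_top N)]
    simp
  have := isProbabilityMeasure_empiricalMeasure (by omega : N ≠ 0) z
  have hfin : (((N : ℝ≥0∞) / (N - 1)) • empiricalMeasure z) A ≠ ∞ := by
    refine ENNReal.mul_ne_top (ENNReal.div_ne_top (ENNReal.natCast_ne_top N) ?_)
      (measure_ne_top _ _)
    exact (tsub_pos_of_lt (by exact_mod_cast (by omega : 1 < N))).ne'
  calc (leaveOneOutMeasure z i).real A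
      ≤ (((N : ℝ≥0∞) / (N - 1)) • empiricalMeasure z).real A :=
        ENNReal.toReal_mono hfin (leaveOneOutMeasure_le (by omega) z i A)
    _ = N / (N - 1) * (empiricalMeasure z).real A := by
        rw [measureReal_def, Measure.smul_apply, smul_eq_mul, ENNReal.toReal_mul, hscalar]; rfl

end Empirical

section Coupling

variable {X Y : Type*} [MeasurableSpace X] [MeasurableSpace Y]

lemma inv_mul_measure_univ_smul (μ : Measure X) [IsFiniteMeasure μ] :
    ((μ univ)⁻¹ * μ univ) • μ = μ := by
  rcases eq_or_ne (μ univ) 0 with h | h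
  · simp [Measure.measure_univ_eq_zero.1 h]
  · rw [ENNReal.inv_mul_cancel h (measure_ne_top μ univ), one_smul]

lemma map_fst_smul_prod {μ : Measure X} {ν : Measure Y} [IsFiniteMeasure μ] [IsFiniteMeasure ν]
    (h : μ univ = ν univ) : ((μ univ)⁻¹ • μ.prod ν).map Prod.fst = μ := by
  rw [Measure.map_smul, Measure.map_fst_prod, smul_smul, ← h, inv_mul_measure_univ_smul]

lemma map_snd_smul_prod {μ : Measure X} {ν : Measure Y} [IsFiniteMeasure ν]
    (h : μ univ = ν univ) : ((μ univ)⁻¹ • μ.prod ν).map Prod.snd = ν := by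
  rw [Measure.map_smul, Measure.map_snd_prod, smul_smul, h, inv_mul_measure_univ_smul]

lemma exists_coupling_le_add (α : Measure X) (β : Measure Y) [IsProbabilityMeasure α]
    [IsProbabilityMeasure β] (ρ : Measure (X × Y)) [IsFiniteMeasure ρ]
    (hα : ρ.map Prod.fst ≤ α) (hβ : ρ.map Prod.snd ≤ β) :
    ∃ π ∈ Couplings α β, ∀ s, π s ≤ ρ s + (1 - ρ univ) := by
  set α' := α - ρ.map Prod.fst
  set β' := β - ρ.map Prod.snd
  have hα' : α' univ = 1 - ρ univ := by
    rw [Measure.sub_apply MeasurableSet.univ hα, measure_univ,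
      Measure.map_apply measurable_fst MeasurableSet.univ, preimage_univ]
  have hβ' : β' univ = 1 - ρ univ := by
    rw [Measure.sub_apply MeasurableSet.univ hβ, measure_univ,
      Measure.map_apply measurable_snd MeasurableSet.univ, preimage_univ]
  -- when `α' univ = 0` we have `α' = 0`, so the junk value `0⁻¹ = ∞` does no harm
  set π := ρ + (α' univ)⁻¹ • α'.prod β'
  have hfst : π.map Prod.fst = α := by
    rw [Measure.map_add _ _ measurable_fst, map_fst_smul_prod (hα'.trans hβ'.symm),
      add_comm, Measure.sub_add_cancel_of_le hα]
  have hsnd : π.map Prod.snd = β := by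
    rw [Measure.map_add _ _ measurable_snd, map_snd_smul_prod (hα'.trans hβ'.symm),
      add_comm, Measure.sub_add_cancel_of_le hβ]
  have hprob : IsProbabilityMeasure π := by
    constructor
    rw [← preimage_univ, ← Measure.map_apply measurable_fst MeasurableSet.univ, hfst, measure_univ]
  refine ⟨π, ⟨hprob, hfst, hsnd⟩, fun s => ?_⟩
  calc π s = ρ s + (α' univ)⁻¹ * (α'.prod β') s := rfl
    _ ≤ ρ s + (α' univ)⁻¹ * (α' univ * β' univ) := by
        gcongr
        rw [← Measure.prod_prod, univ_prod_univ]
        exact measure_mono (subset_univ s)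
    _ ≤ ρ s + (1 - ρ univ) := by
        rw [← mul_assoc, ← hβ']
        gcongr
        exact mul_le_of_le_one_left zero_le (ENNReal.inv_mul_le_one _)

noncomputable def minMassProd (μ : Measure X) (ν : Measure Y) : Measure (X × Y) :=
  (max (μ univ) (ν univ))⁻¹ • μ.prod ν

variable {μ : Measure X} {ν : Measure Y}

lemma map_fst_minMassProd_le [IsFiniteMeasure ν] : (minMassProd μ ν).map Prod.fst ≤ μ := by
  rw [minMassProd, Measure.map_smul, Measure.map_fst_prod, smul_smul]
  calc _ ≤ (1 : ℝ≥0∞) • μ := by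
        gcongr
        exact (mul_le_mul' le_rfl (le_max_right _ _)).trans (ENNReal.inv_mul_le_one _)
    _ = μ := one_smul _ _

lemma map_snd_minMassProd_le [IsFiniteMeasure ν] : (minMassProd μ ν).map Prod.snd ≤ ν := by
  rw [minMassProd, Measure.map_smul, Measure.map_snd_prod, smul_smul]
  calc _ ≤ (1 : ℝ≥0∞) • ν := by
        gcongr
        exact (mul_le_mul' le_rfl (le_max_left _ _)).trans (ENNReal.inv_mul_le_one _)
    _ = ν := one_smul _ _

lemma minMassProd_univ [IsFiniteMeasure μ] [IsFiniteMeasure ν] :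
    minMassProd μ ν univ = min (μ univ) (ν univ) := by
  rw [minMassProd, Measure.smul_apply, smul_eq_mul, ← univ_prod_univ, Measure.prod_prod,
    ← min_mul_max (μ univ) (ν univ), mul_comm, mul_assoc]
  rcases eq_or_ne (max (μ univ) (ν univ)) 0 with h | h
  · simp [nonpos_iff_eq_zero.1 (h ▸ min_le_max : min (μ univ) (ν univ) ≤ 0)]
  · rw [ENNReal.mul_inv_cancel h (max_ne_top (measure_ne_top _ _) (measure_ne_top _ _)), mul_one]

instance [IsFiniteMeasure μ] [IsFiniteMeasure ν] : IsFiniteMeasure (minMassProd μ ν) :=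
  ⟨minMassProd_univ (μ := μ) (ν := ν) ▸ (min_le_left _ _).trans_lt (measure_lt_top _ _)⟩

lemma exists_subcoupling_of_partition (α : Measure X) (β : Measure X) [IsFiniteMeasure α]
    [IsFiniteMeasure β] {ι : Type*} [Fintype ι] (A : ι → Set X) (hmeas : ∀ k, MeasurableSet (A k))
    (hdisj : Pairwise (Function.onFun Disjoint A)) (hcover : ⋃ k, A k = univ) :
    ∃ ρ : Measure (X × X), IsFiniteMeasure ρ ∧ ρ.map Prod.fst ≤ α ∧ ρ.map Prod.snd ≤ β ∧
      ρ (⋃ k, A k ×ˢ A k)ᶜ = 0 ∧ ρ.real univ = ∑ k, min (α.real (A k)) (β.real (A k)) := by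
  have hsum : ∀ μ : Measure X, ∑ k, μ.restrict (A k) = μ := fun μ => by
    rw [← Measure.sum_fintype, ← Measure.restrict_iUnion hdisj hmeas, hcover, Measure.restrict_univ]
  refine ⟨∑ k, minMassProd (α.restrict (A k)) (β.restrict (A k)), inferInstance, ?_, ?_, ?_, ?_⟩
  · rw [← Measure.sum_fintype, Measure.map_sum measurable_fst.aemeasurable, Measure.sum_fintype]
    conv_rhs => rw [← hsum α]
    exact Finset.sum_le_sum fun k _ => map_fst_minMassProd_le
  · rw [← Measure.sum_fintype, Measure.map_sum measurable_snd.aemeasurable, Measure.sum_fintype]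
    conv_rhs => rw [← hsum β]
    exact Finset.sum_le_sum fun k _ => map_snd_minMassProd_le
  · refine (Measure.finsetSum_apply _ _ _).trans (Finset.sum_eq_zero fun k _ => ?_)
    rw [minMassProd, Measure.smul_apply, Measure.prod_restrict,
      (Measure.restrict_apply_eq_zero' ((hmeas k).prod (hmeas k))).2, smul_zero]
    exact measure_mono_null (fun p hp => (hp.1 (mem_iUnion.2 ⟨k, hp.2⟩)).elim) measure_empty
  · rw [measureReal_def, Measure.finsetSum_apply, ENNReal.toReal_sum fun k _ => measure_ne_top _ _]
    refine Finset.sum_congr rfl fun k _ => ?_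
    rw [minMassProd_univ, ENNReal.toReal_min (measure_ne_top _ _) (measure_ne_top _ _),
      Measure.restrict_apply_univ, Measure.restrict_apply_univ]
    rfl

end Coupling

section Wasserstein

variable {X : Type*} [PseudoMetricSpace X] [MeasurableSpace X]

lemma W1_nonneg (α β : Measure X) : 0 ≤ W1 α β :=
  Real.sInf_nonneg <| by
    rintro _ ⟨π, -, rfl⟩
    exact integral_nonneg fun _ => dist_nonneg

lemma W1_le_integral {α β : Measure X} {π : Measure (X × X)} (hπ : π ∈ Couplings α β) :
    W1 α β ≤ ∫ p, dist p.1 p.2 ∂π :=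
  csInf_le ⟨0, by rintro _ ⟨π, -, rfl⟩; exact integral_nonneg fun _ => dist_nonneg⟩ ⟨π, hπ, rfl⟩

lemma W1_self [OpensMeasurableSpace X] [SecondCountableTopology X] (α : Measure X)
    [IsProbabilityMeasure α] : W1 α α = 0 := by
  have hdiag : Measurable fun x : X => (x, x) := measurable_id.prodMk measurable_id
  have hπ : α.map (fun x => (x, x)) ∈ Couplings α α :=
    ⟨Measure.isProbabilityMeasure_map hdiag.aemeasurable,
      by rw [Measure.map_map measurable_fst hdiag]; exact Measure.map_id,
      by rw [Measure.map_map measurable_snd hdiag]; exact Measure.map_id⟩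
  refine le_antisymm ((W1_le_integral hπ).trans_eq ?_) (W1_nonneg α α)
  rw [integral_map_of_stronglyMeasurable hdiag continuous_dist.stronglyMeasurable]
  simp

variable [CompactSpace X] [OpensMeasurableSpace X]

lemma integral_dist_le (π : Measure (X × X)) [IsProbabilityMeasure π] {ε : ℝ} (hε : 0 ≤ ε) :
    ∫ p, dist p.1 p.2 ∂π ≤ ε + Metric.diam (univ : Set X) * π.real {p | ε < dist p.1 p.2} := by
  set D := Metric.diam (univ : Set X)
  set far := {p : X × X | ε < dist p.1 p.2}
  have hfar : MeasurableSet far := measurableSet_lt measurable_const continuous_dist.measurable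
  have hbound : ∀ p : X × X, dist p.1 p.2 ≤ ε + D * far.indicator 1 p := by
    intro p
    by_cases hp : p ∈ far
    · rw [indicator_of_mem hp, Pi.one_apply, mul_one]
      have := Metric.dist_le_diam_of_mem isCompact_univ.isBounded (mem_univ p.1) (mem_univ p.2)
      linarith
    · rw [indicator_of_notMem hp, mul_zero, add_zero]
      exact not_lt.1 hp
  have hind : Integrable (fun p : X × X => D * far.indicator 1 p) π :=
    ((integrable_const 1).indicator hfar).const_mul D
  calc ∫ p, dist p.1 p.2 ∂π ≤ ∫ p, ε + D * far.indicator 1 p ∂π :=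
        integral_mono (continuous_dist.integrable_of_hasCompactSupport
          (HasCompactSupport.of_compactSpace _)) ((integrable_const ε).add hind) hbound
    _ = ε + D * π.real far := by
        rw [integral_add (integrable_const ε) hind, integral_const, integral_const_mul,
          integral_indicator_one hfar]
        simp

/-- Within each cell the mass `min (α (A k)) (β (A k))` is matched at cost at most `ε`; the rest,
of total mass at most `card ι * η`, is moved at cost at most the diameter. -/
lemma W1_le_of_partition (α β : Measure X) [IsProbabilityMeasure α] [IsProbabilityMeasure β]
    {ι : Type*} [Fintype ι] (A : ι → Set X) (hmeas : ∀ k, MeasurableSet (A k))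
    (hdisj : Pairwise (Function.onFun Disjoint A)) (hcover : ⋃ k, A k = univ)
    {ε : ℝ} (hε : 0 ≤ ε) (hdiam : ∀ k, ∀ x ∈ A k, ∀ y ∈ A k, dist x y ≤ ε)
    {η : ℝ} (hη₀ : 0 ≤ η) (hη : ∀ k, α.real (A k) ≤ β.real (A k) + η) :
    W1 α β ≤ ε + Metric.diam (univ : Set X) * (Fintype.card ι * η) := by
  obtain ⟨ρ, hρfin, hρα, hρβ, hρdiag, hρmass⟩ :=
    exists_subcoupling_of_partition α β A hmeas hdisj hcover
  obtain ⟨π, hπ, hπle⟩ := exists_coupling_le_add α β ρ hρα hρβ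
  have := hπ.1
  set far := {p : X × X | ε < dist p.1 p.2}
  have hρfar : ρ far = 0 := by
    refine measure_mono_null (fun p hp => mem_compl fun hpdiag => ?_) hρdiag
    obtain ⟨k, hk1, hk2⟩ := mem_iUnion.1 hpdiag
    exact (not_lt.2 (hdiam k _ hk1 _ hk2)) hp
  have hρ_le : ρ univ ≤ 1 := by
    rw [← preimage_univ, ← Measure.map_apply measurable_fst MeasurableSet.univ]
    exact (hρα univ).trans prob_le_one
  have hπfar : π.real far ≤ 1 - ρ.real univ := by
    have h := hπle far
    rw [hρfar, zero_add] at h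
    have := ENNReal.toReal_mono (ENNReal.sub_ne_top ENNReal.one_ne_top) h
    rwa [ENNReal.toReal_sub_of_le hρ_le ENNReal.one_ne_top, ENNReal.toReal_one] at this
  have hα1 : ∑ k, α.real (A k) = 1 := by
    rw [← measureReal_iUnion_fintype hdisj hmeas, hcover, probReal_univ]
  have hπfar' : π.real far ≤ Fintype.card ι * η := by
    have : ∑ k, (α.real (A k) - η) ≤ ρ.real univ := by
      rw [hρmass]
      exact Finset.sum_le_sum fun k _ => le_min (by linarith) (by linarith [hη k])
    rw [Finset.sum_sub_distrib, hα1] at this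
    simp only [Finset.sum_const, Finset.card_univ, nsmul_eq_mul] at this
    linarith
  calc W1 α β ≤ ∫ p, dist p.1 p.2 ∂π := W1_le_integral hπ
    _ ≤ ε + Metric.diam (univ : Set X) * π.real far := integral_dist_le π hε
    _ ≤ ε + Metric.diam (univ : Set X) * (Fintype.card ι * η) := by
        gcongr

end Wasserstein

section Partition

variable {X : Type*} [MeasurableSpace X]

lemma measure_frontier_disjointed_eq_zero [TopologicalSpace X] {ι : Type*} [Preorder ι]
    [LocallyFiniteOrderBot ι] (ν : Measure X) {B : ι → Set X}
    (hB : ∀ k, ν (frontier (B k)) = 0) (k : ι) :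
    ν (frontier (disjointed B k)) = 0 := by
  refine disjointedRec (fun t j ht => measure_mono_null ?_ (measure_union_null ht (hB j))) (hB k)
  rw [sdiff_eq]
  refine (frontier_inter_subset _ _).trans (union_subset_union inter_subset_left ?_)
  rw [frontier_compl]
  exact inter_subset_right

lemma exists_partition_null_frontier [PseudoMetricSpace X] [CompactSpace X]
    [OpensMeasurableSpace X] (ν : Measure X) [IsFiniteMeasure ν] {ε : ℝ} (hε : 0 < ε) :
    ∃ (m : ℕ) (A : Fin m → Set X), (∀ k, MeasurableSet (A k)) ∧
      Pairwise (Function.onFun Disjoint A) ∧ ⋃ k, A k = univ ∧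
      (∀ k, ∀ x ∈ A k, ∀ y ∈ A k, dist x y ≤ ε) ∧ ∀ k, ν (frontier (A k)) = 0 := by
  have hr : ∀ x : X, ∃ r ∈ Ioo 0 (ε / 2), ν (frontier (Metric.ball x r)) = 0 := fun x => by
    simpa only [Metric.thickening_singleton] using
      exists_null_frontier_thickening ν {x} (half_pos hε)
  choose r hr hfront using hr
  obtain ⟨t, ht⟩ := isCompact_univ.elim_finite_subcover (fun x => Metric.ball x (r x))
    (fun x => Metric.isOpen_ball) fun x _ => mem_iUnion.2 ⟨x, Metric.mem_ball_self (hr x).1⟩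
  set c : Fin t.card → X := fun k => t.equivFin.symm k
  set B : Fin t.card → Set X := fun k => Metric.ball (c k) (r (c k))
  refine ⟨t.card, disjointed B, fun k => ?_, disjoint_disjointed B, ?_, fun k x hx y hy => ?_,
    measure_frontier_disjointed_eq_zero ν (fun k => hfront _)⟩
  · exact disjointedRec (fun s j hs => hs.diff Metric.isOpen_ball.measurableSet)
      Metric.isOpen_ball.measurableSet
  · rw [iUnion_disjointed]
    refine eq_univ_of_forall fun x => ?_
    obtain ⟨y, hy, hxy⟩ := mem_iUnion₂.1 (ht (mem_univ x))
    exact mem_iUnion.2 ⟨t.equivFin ⟨y, hy⟩, by simpa [B, c] using hxy⟩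
  · have hx' := Metric.mem_ball.1 (disjointed_le B k hx)
    have hy' := Metric.mem_ball.1 (disjointed_le B k hy)
    linarith [dist_triangle_right x y (c k), (hr (c k)).2]

end Partition

section EmpiricalConvergence

variable {E : Type*} [MeasurableSpace E]

lemma tendsto_empiricalMeasure_apply [TopologicalSpace E] [OpensMeasurableSpace E]
    [HasOuterApproxClosed E] {z : (N : ℕ) → Fin N → E} {ν : Measure E} [IsProbabilityMeasure ν]
    (hν : ∀ g : C(E, ℝ), Tendsto (fun N => ∫ x, g x ∂empiricalMeasure (z N)) atTop
      (𝓝 (∫ x, g x ∂ν)))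
    {A : Set E} (hA : ν (frontier A) = 0) :
    Tendsto (fun N => empiricalMeasure (z N) A) atTop (𝓝 (ν A)) := by
  let P : ℕ → ProbabilityMeasure E := fun n =>
    ⟨empiricalMeasure (z (n + 1)), isProbabilityMeasure_empiricalMeasure n.succ_ne_zero _⟩
  have hP : Tendsto P atTop (𝓝 ⟨ν, inferInstance⟩) :=
    ProbabilityMeasure.tendsto_iff_forall_integral_tendsto.2 fun g =>
      (tendsto_add_atTop_iff_nat 1).2 (hν g.toContinuousMap)
  exact (tendsto_add_atTop_iff_nat 1).1
    (ProbabilityMeasure.tendsto_measure_of_null_frontier_of_tendsto' hP hA)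

lemma eventually_leaveOneOutMeasure_real_lt {z : (N : ℕ) → Fin N → E} {ν : Measure E}
    [IsFiniteMeasure ν] {A : Set E}
    (hA : Tendsto (fun N => empiricalMeasure (z N) A) atTop (𝓝 (ν A))) {η : ℝ} (hη : 0 < η) :
    ∀ᶠ N in atTop, ∀ i, (leaveOneOutMeasure (z N) i).real A < ν.real A + η := by
  have hlim : Tendsto (fun N : ℕ => N / (N + -1) * (empiricalMeasure (z N)).real A) atTop
      (𝓝 (1 * ν.real A)) :=
    (tendsto_natCast_div_add_atTop (-1 : ℝ)).mul
      ((ENNReal.tendsto_toReal (measure_ne_top ν A)).comp hA)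
  rw [one_mul] at hlim
  filter_upwards [hlim.eventually (gt_mem_nhds (lt_add_of_pos_right _ hη)),
    eventually_ge_atTop 2] with N hN hN2 i
  rw [← sub_eq_add_neg] at hN
  exact (leaveOneOutMeasure_real_le hN2 (z N) i A).trans_lt hN

lemma eventually_W1_leaveOneOutMeasure_lt [PseudoMetricSpace E] [CompactSpace E]
    [OpensMeasurableSpace E] {z : (N : ℕ) → Fin N → E} {ν : Measure E} [IsProbabilityMeasure ν]
    (hν : ∀ g : C(E, ℝ), Tendsto (fun N => ∫ x, g x ∂empiricalMeasure (z N)) atTop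
      (𝓝 (∫ x, g x ∂ν)))
    {δ : ℝ} (hδ : 0 < δ) : ∀ᶠ N in atTop, ∀ i, W1 (leaveOneOutMeasure (z N) i) ν < δ := by
  obtain ⟨m, A, hmeas, hdisj, hcover, hdiam, hfront⟩ :=
    exists_partition_null_frontier ν (half_pos hδ)
  set D := Metric.diam (univ : Set E)
  have hD : 0 ≤ D := Metric.diam_nonneg
  set η := δ / (2 * (m + 1) * (D + 1))
  have hη : 0 < η := by positivity
  have hcells : ∀ᶠ N in atTop, ∀ k i, (leaveOneOutMeasure (z N) i).real (A k) < ν.real (A k) + η :=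
    eventually_all.2 fun k =>
      eventually_leaveOneOutMeasure_real_lt (tendsto_empiricalMeasure_apply hν (hfront k)) hη
  filter_upwards [hcells, eventually_ge_atTop 2] with N hN hN2 i
  have := isProbabilityMeasure_leaveOneOutMeasure hN2 (z N) i
  calc W1 (leaveOneOutMeasure (z N) i) ν ≤ δ / 2 + D * (Fintype.card (Fin m) * η) :=
        W1_le_of_partition _ ν A hmeas hdisj hcover (half_pos hδ).le hdiam hη.le
          fun k => (hN k i).le
    _ < δ := by
        have : D * (m * η) < δ / 2 := by
          rw [show D * (m * η) = δ / 2 * (D * m / ((m + 1) * (D + 1))) by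
            simp only [η]; field_simp]
          refine mul_lt_of_lt_one_right (half_pos hδ) ((div_lt_one (by positivity)).2 ?_)
          nlinarith
        rw [Fintype.card_fin]
        linarith

end EmpiricalConvergence

section WeakLimits

variable {E F : Type*} [TopologicalSpace E] [MeasurableSpace E] [OpensMeasurableSpace E]
  [TopologicalSpace F] [MeasurableSpace F] [BorelSpace F] [HasOuterApproxClosed F]

lemma map_eq_of_tendsto_integral {P : ℕ → Measure E} {p : Measure E} {q : Measure F}
    [IsFiniteMeasure p] [IsFiniteMeasure q] {f : E → F} (hf : Continuous f)
    (hP : ∀ g : C(E, ℝ), Tendsto (fun n => ∫ x, g x ∂P n) atTop (𝓝 (∫ x, g x ∂p)))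
    (hQ : ∀ g : C(F, ℝ), Tendsto (fun n => ∫ y, g y ∂(P n).map f) atTop (𝓝 (∫ y, g y ∂q))) :
    p.map f = q := by
  have hmap : ∀ (μ : Measure E) (g : C(F, ℝ)), ∫ y, g y ∂μ.map f = ∫ x, g (f x) ∂μ := fun μ g =>
    integral_map hf.aemeasurable g.continuous.aestronglyMeasurable
  refine ext_of_forall_integral_eq_of_IsFiniteMeasure fun g =>
    tendsto_nhds_unique ?_ (hQ g.toContinuousMap)
  convert hP (g.toContinuousMap.comp ⟨f, hf⟩) using 2
  · exact hmap _ g.toContinuousMap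
  · exact hmap p g.toContinuousMap

end WeakLimits

lemma ae_nonpos_of_tendsto_empiricalMeasure {E : Type*} [TopologicalSpace E] [CompactSpace E]
    [MeasurableSpace E] [OpensMeasurableSpace E] [MeasurableSingletonClass E]
    {z : (N : ℕ) → Fin N → E} {γ : Measure E} [IsFiniteMeasure γ]
    (hγ : ∀ g : C(E, ℝ), Tendsto (fun N => ∫ p, g p ∂empiricalMeasure (z N)) atTop
      (𝓝 (∫ p, g p ∂γ)))
    {f : E → ℝ} (hf : Continuous f) (hz : ∀ r > 0, ∀ᶠ N in atTop, ∀ i, f (z N i) ≤ r) :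
    ∀ᵐ p ∂γ, f p ≤ 0 := by
  let g : C(E, ℝ) := ⟨fun p => max (f p) 0, hf.max continuous_const⟩
  have hg : ∀ r > 0, ∫ p, g p ∂γ ≤ r := fun r hr =>
    le_of_tendsto (hγ g) <| (hz r hr).mono fun N hN => by
      rw [integral_empiricalMeasure]
      calc (N : ℝ)⁻¹ * ∑ i, g (z N i) ≤ (N : ℝ)⁻¹ * ∑ _i : Fin N, r := by
            gcongr with i
            exact max_le (hN i) hr.le
        _ ≤ r := by
            rcases N.eq_zero_or_pos with rfl | hN0
            · simpa using hr.le
            · simp [field]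
  have hzero : ∫ p, g p ∂γ = 0 :=
    le_antisymm (le_of_forall_pos_le_add fun r hr => by simpa using hg r hr)
      (integral_nonneg fun p => le_max_right _ _)
  have hint : Integrable g γ :=
    g.continuous.integrable_of_hasCompactSupport (HasCompactSupport.of_compactSpace _)
  filter_upwards [(integral_eq_zero_iff_of_nonneg (fun p => le_max_right _ _) hint).1 hzero]
    with p hp
  exact max_eq_right_iff.1 hp

lemma ae_forall_of_isClosed {α X : Type*} [MeasurableSpace α] {μ : Measure α}
    [TopologicalSpace X] [TopologicalSpace.SeparableSpace X] {P : α → X → Prop}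
    (hP : ∀ a, IsClosed {y | P a y}) (h : ∀ y, ∀ᵐ a ∂μ, P a y) : ∀ᵐ a ∂μ, ∀ y, P a y := by
  obtain ⟨D, hD, hDense⟩ := TopologicalSpace.exists_countable_dense X
  filter_upwards [(ae_ball_iff hD).2 fun y _ => h y] with a ha
  intro y
  have : closure D ⊆ {y | P a y} := closure_minimal (fun y hy => ha y hy) (hP a)
  exact this (hDense.closure_eq ▸ mem_univ y)

lemma continuous_of_abs_sub_le {α β : Type*} [PseudoMetricSpace α] [PseudoMetricSpace β]
    {f : α × β → ℝ} {ω : ℝ → ℝ} (hω : Tendsto ω (𝓝 0) (𝓝 0))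
    (hf : ∀ p q, |f p - f q| ≤ ω (dist p.1 q.1) + ω (dist p.2 q.2)) : Continuous f := by
  refine continuous_iff_continuousAt.2 fun q => tendsto_iff_dist_tendsto_zero.2 ?_
  have hlim : Tendsto (fun p : α × β => ω (dist p.1 q.1) + ω (dist p.2 q.2)) (𝓝 q) (𝓝 0) := by
    simpa using (hω.comp ((continuous_fst.dist continuous_const).tendsto' q 0 (by simp))).add
      (hω.comp ((continuous_snd.dist continuous_const).tendsto' q 0 (by simp)))
  exact squeeze_zero (fun _ => dist_nonneg) (fun p => (Real.dist_eq _ _).trans_le (hf p q)) hlim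

section Game

variable {Θ X : Type*} [MetricSpace Θ] [MetricSpace X] [MeasurableSpace X]
  {F : ℕ → Θ → X → Measure X → ℝ} {Flim : Θ → X → Measure X → ℝ} {ω : ℝ → ℝ}

lemma continuous_limit_cost [OpensMeasurableSpace X] [SecondCountableTopology X]
    (hω_zero : ω 0 = 0) (hω : Tendsto ω (𝓝 0) (𝓝 0))
    (hF_mod : ∀ (N : ℕ) (t t' : Θ) (x x' : X) (ν ν' : Measure X),
      IsProbabilityMeasure ν → IsProbabilityMeasure ν' →
      |F N t x ν - F N t' x' ν'| ≤ ω (dist t t') + ω (dist x x') + ω (W1 ν ν'))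
    (hFconv : TendstoUniformlyOn (fun N p => F N p.1 p.2.1 p.2.2)
      (fun p => Flim p.1 p.2.1 p.2.2) atTop
      {p : Θ × X × Measure X | IsProbabilityMeasure p.2.2})
    (ν : Measure X) [IsProbabilityMeasure ν] :
    Continuous fun p : Θ × X => Flim p.1 p.2 ν := by
  have hlim : ∀ t x, Tendsto (fun N => F N t x ν) atTop (𝓝 (Flim t x ν)) := fun t x =>
    hFconv.tendsto_at (show IsProbabilityMeasure (t, x, ν).2.2 from ‹_›)
  refine continuous_of_abs_sub_le hω fun p q =>
    le_of_tendsto ((hlim _ _).sub (hlim _ _)).abs (Eventually.of_forall fun N => ?_)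
  simpa [W1_self, hω_zero] using hF_mod N p.1 q.1 p.2 q.2 ν ν ‹_› ‹_›

lemma eventually_sub_le_of_nash (θ : (N : ℕ) → Fin N → Θ) (xbar : (N : ℕ) → Fin N → X)
    (hω_zero : ω 0 = 0) (hω : Tendsto ω (𝓝 0) (𝓝 0))
    (hF_mod : ∀ (N : ℕ) (t t' : Θ) (x x' : X) (ν ν' : Measure X),
      IsProbabilityMeasure ν → IsProbabilityMeasure ν' →
      |F N t x ν - F N t' x' ν'| ≤ ω (dist t t') + ω (dist x x') + ω (W1 ν ν'))
    (hNash : ∀ N, 2 ≤ N → ∀ i : Fin N, ∀ y : X,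
      F N (θ N i) (xbar N i) (leaveOneOutMeasure (xbar N) i) ≤
        F N (θ N i) y (leaveOneOutMeasure (xbar N) i))
    (hFconv : TendstoUniformlyOn (fun N p => F N p.1 p.2.1 p.2.2)
      (fun p => Flim p.1 p.2.1 p.2.2) atTop
      {p : Θ × X × Measure X | IsProbabilityMeasure p.2.2})
    (ν : Measure X) [IsProbabilityMeasure ν]
    (hW : ∀ δ > 0, ∀ᶠ N in atTop, ∀ i, W1 (leaveOneOutMeasure (xbar N) i) ν < δ) :
    ∀ r > 0, ∀ᶠ N in atTop, ∀ i y, Flim (θ N i) (xbar N i) ν - Flim (θ N i) y ν ≤ r := by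
  intro r hr
  obtain ⟨δ, hδ, hωδ⟩ := Metric.tendsto_nhds_nhds.1 hω (r / 4) (by positivity)
  filter_upwards [hW δ hδ, Metric.tendstoUniformlyOn_iff.1 hFconv (r / 4) (by positivity),
    eventually_ge_atTop 2] with N hWN hFN hN i y
  set σ := leaveOneOutMeasure (xbar N) i
  have := isProbabilityMeasure_leaveOneOutMeasure hN (xbar N) i
  have hωσ : ω (W1 σ ν) < r / 4 := by
    have h := hωδ (x := W1 σ ν) (by simpa [Real.dist_eq, abs_of_nonneg (W1_nonneg σ ν)] using hWN i)
    exact (le_abs_self _).trans_lt (by simpa [Real.dist_eq] using h)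
  have hmod : ∀ x, |F N (θ N i) x σ - F N (θ N i) x ν| ≤ ω (W1 σ ν) := fun x => by
    simpa [hω_zero] using hF_mod N (θ N i) (θ N i) x x σ ν ‹_› ‹_›
  have hunif : ∀ x, |Flim (θ N i) x ν - F N (θ N i) x ν| < r / 4 := fun x => by
    simpa [Real.dist_eq] using hFN (θ N i, x, ν) ‹IsProbabilityMeasure ν›
  linarith [hNash N hN i y, abs_le.1 (hmod (xbar N i)), abs_le.1 (hmod y),
    abs_lt.1 (hunif (xbar N i)), abs_lt.1 (hunif y)]

end Game

theorem nash_tendsto_cournotNash_general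
    {Θ X : Type*}
    [MetricSpace Θ] [CompactSpace Θ] [MeasurableSpace Θ] [BorelSpace Θ]
    [MetricSpace X] [CompactSpace X] [MeasurableSpace X] [BorelSpace X]
    (θ : (N : ℕ) → Fin N → Θ)
    (F : ℕ → Θ → X → Measure X → ℝ) (Flim : Θ → X → Measure X → ℝ)
    (ω : ℝ → ℝ) (hω_cont : ContinuousAt ω 0) (hω_zero : ω 0 = 0)
    (hF_mod : ∀ (N : ℕ) (t t' : Θ) (x x' : X) (ν ν' : Measure X),
      IsProbabilityMeasure ν → IsProbabilityMeasure ν' →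
      |F N t x ν - F N t' x' ν'| ≤ ω (dist t t') + ω (dist x x') + ω (W1 ν ν'))
    (xbar : (N : ℕ) → Fin N → X)
    (hNash : ∀ N, 2 ≤ N → ∀ i : Fin N, ∀ y : X,
      F N (θ N i) (xbar N i)
          (((N : ℝ≥0∞) - 1)⁻¹ • ∑ j ∈ Finset.univ.erase i, Measure.dirac (xbar N j)) ≤
        F N (θ N i) y
          (((N : ℝ≥0∞) - 1)⁻¹ • ∑ j ∈ Finset.univ.erase i, Measure.dirac (xbar N j)))
    (μ : Measure Θ) (ν : Measure X) (γ : Measure (Θ × X))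
    [IsProbabilityMeasure μ] [IsProbabilityMeasure ν] [IsProbabilityMeasure γ]
    (hμ : ∀ g : C(Θ, ℝ), Tendsto
      (fun N : ℕ => ∫ t, g t ∂((N : ℝ≥0∞)⁻¹ • ∑ i : Fin N, Measure.dirac (θ N i)))
      atTop (𝓝 (∫ t, g t ∂μ)))
    (hν : ∀ g : C(X, ℝ), Tendsto
      (fun N : ℕ => ∫ x, g x ∂((N : ℝ≥0∞)⁻¹ • ∑ i : Fin N, Measure.dirac (xbar N i)))
      atTop (𝓝 (∫ x, g x ∂ν)))
    (hγ : ∀ g : C(Θ × X, ℝ), Tendsto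
      (fun N : ℕ => ∫ p, g p ∂((N : ℝ≥0∞)⁻¹ • ∑ i : Fin N, Measure.dirac (θ N i, xbar N i)))
      atTop (𝓝 (∫ p, g p ∂γ)))
    (hFconv : TendstoUniformlyOn (fun N p => F N p.1 p.2.1 p.2.2)
      (fun p => Flim p.1 p.2.1 p.2.2) atTop
      {p : Θ × X × Measure X | IsProbabilityMeasure p.2.2}) :
    γ.map Prod.fst = μ ∧ γ.map Prod.snd = ν ∧
      γ {p : Θ × X | ∀ y : X, Flim p.1 p.2 ν ≤ Flim p.1 y ν} = 1 := by
  set z : (N : ℕ) → Fin N → Θ × X := fun N i => (θ N i, xbar N i)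
  have hω : Tendsto ω (𝓝 0) (𝓝 0) := by simpa only [hω_zero] using hω_cont.tendsto
  have hFlim := continuous_limit_cost hω_zero hω hF_mod hFconv ν
  have hNash' := eventually_sub_le_of_nash θ xbar hω_zero hω hF_mod hNash hFconv ν
    fun δ hδ => eventually_W1_leaveOneOutMeasure_lt hν hδ
  refine ⟨map_eq_of_tendsto_integral (P := fun N => empiricalMeasure (z N)) continuous_fst hγ ?_,
    map_eq_of_tendsto_integral (P := fun N => empiricalMeasure (z N)) continuous_snd hγ ?_, ?_⟩
  · simp only [empiricalMeasure_map _ measurable_fst]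
    exact hμ
  · simp only [empiricalMeasure_map _ measurable_snd]
    exact hν
  have hbest : ∀ y, ∀ᵐ p ∂γ, Flim p.1 p.2 ν - Flim p.1 y ν ≤ 0 := fun y =>
    ae_nonpos_of_tendsto_empiricalMeasure (z := z) hγ
      (hFlim.sub (hFlim.comp (continuous_fst.prodMk continuous_const)))
      fun r hr => (hNash' r hr).mono fun N hN i => hN i y
  have hall := ae_forall_of_isClosed
    (fun p => isClosed_le continuous_const (hFlim.comp (continuous_const.prodMk continuous_id)))
    fun y => (hbest y).mono fun p hp => sub_nonpos.1 hp
  exact (measure_congr (ae_eq_univ.2 hall)).trans measure_univ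

/-- **Pure Nash equilibria converge to Cournot-Nash equilibria.**
Players `i = 1, …, N` have types `θ N i`, common compact metric strategy space `X`, and
costs `Jᵢ^N(x) = F^N(θᵢ, xᵢ, (1/(N-1)) Σ_{j≠i} δ_{xⱼ})`, where the `F^N` are uniformly
equi-continuous on `Θ × X × P(X)` with a common modulus of continuity `ω` (the measure
variable being measured with the 1-Wasserstein metric `W₁`).  If `x̄^N` is a Nash
equilibrium of the `N`-player game, `μ^N, ν^N, γ^N` are the associated empirical
measures, and (up to subsequences) `μ^N ⇀ μ`, `ν^N ⇀ ν`, `γ^N ⇀ γ` weakly-* while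
`F^N → F` uniformly on `Θ × X × P(X)`, then `γ` is a Cournot-Nash equilibrium for `F`
and `μ`: its marginals are `μ` and `ν` and it gives full mass to cost-minimising
strategies. -/
theorem nash_tendsto_cournotNash
    {Θ X : Type*}
    [MetricSpace Θ] [CompactSpace Θ] [MeasurableSpace Θ] [BorelSpace Θ]
    [MetricSpace X] [CompactSpace X] [MeasurableSpace X] [BorelSpace X]
    (θ : (N : ℕ) → Fin N → Θ)
    (F : ℕ → Θ → X → Measure X → ℝ) (Flim : Θ → X → Measure X → ℝ)
    (ω : ℝ → ℝ) (hω_mono : Monotone ω) (hω_cont : ContinuousAt ω 0) (hω_zero : ω 0 = 0)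
    (hF_mod : ∀ (N : ℕ) (t t' : Θ) (x x' : X) (ν ν' : Measure X),
      IsProbabilityMeasure ν → IsProbabilityMeasure ν' →
      |F N t x ν - F N t' x' ν'| ≤ ω (dist t t') + ω (dist x x') + ω (W1 ν ν'))
    (xbar : (N : ℕ) → Fin N → X)
    (hNash : ∀ N, 2 ≤ N → ∀ i : Fin N, ∀ y : X,
      F N (θ N i) (xbar N i)
          (((N : ℝ≥0∞) - 1)⁻¹ • ∑ j ∈ Finset.univ.erase i, Measure.dirac (xbar N j)) ≤
        F N (θ N i) y
          (((N : ℝ≥0∞) - 1)⁻¹ • ∑ j ∈ Finset.univ.erase i, Measure.dirac (xbar N j)))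
    (μ : Measure Θ) (ν : Measure X) (γ : Measure (Θ × X))
    [IsProbabilityMeasure μ] [IsProbabilityMeasure ν] [IsProbabilityMeasure γ]
    (hμ : ∀ g : C(Θ, ℝ), Tendsto
      (fun N : ℕ => ∫ t, g t ∂((N : ℝ≥0∞)⁻¹ • ∑ i : Fin N, Measure.dirac (θ N i)))
      atTop (𝓝 (∫ t, g t ∂μ)))
    (hν : ∀ g : C(X, ℝ), Tendsto
      (fun N : ℕ => ∫ x, g x ∂((N : ℝ≥0∞)⁻¹ • ∑ i : Fin N, Measure.dirac (xbar N i)))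
      atTop (𝓝 (∫ x, g x ∂ν)))
    (hγ : ∀ g : C(Θ × X, ℝ), Tendsto
      (fun N : ℕ => ∫ p, g p ∂((N : ℝ≥0∞)⁻¹ • ∑ i : Fin N, Measure.dirac (θ N i, xbar N i)))
      atTop (𝓝 (∫ p, g p ∂γ)))
    (hFconv : TendstoUniformlyOn (fun N p => F N p.1 p.2.1 p.2.2)
      (fun p => Flim p.1 p.2.1 p.2.2) atTop
      {p : Θ × X × Measure X | IsProbabilityMeasure p.2.2}) :
    γ.map Prod.fst = μ ∧ γ.map Prod.snd = ν ∧
      γ {p : Θ × X | ∀ y : X, Flim p.1 p.2 ν ≤ Flim p.1 y ν} = 1 :=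
  nash_tendsto_cournotNash_general θ F Flim ω hω_cont hω_zero hF_mod xbar hNash μ ν γ hμ hν hγ
    hFconv
end

section
/- Let Θ and X be compact metric spaces, N ≥ 2, θ_1,…,θ_N ∈ Θ, and let F^N : Θ × X × P(X) → ℝ admit a modulus of continuity ω in its third argument with respect to the 1-Wasserstein metric, uniformly in the first two arguments. Let x̄^N = (x_1^N,…,x_N^N) be a Nash equilibrium of the game with costs J_i^N(x_i,x_{-i}) = F^N(θ_i, x_i, (1/(N−1)) Σ_{j≠i} δ_{x_j}), and set μ^N := (1/N) Σ_i δ_{θ_i}, ν^N := (1/N) Σ_i δ_{x_i^N}, γ^N := (1/N) Σ_i δ_{(θ_i, x_i^N)}. Then ∫_{Θ×X} F^N(θ, x, ν^N) γ^N(dθ,dx) ≤ ∫_Θ min_{y∈X} F^N(θ, y, ν^N) μ^N(dθ) + ε_N, where ε_N := 2 ω(diam(X)/N). -/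
open MeasureTheory
open scoped ENNReal NNReal

/-!
Write `ν` for the empirical measure of `x̄` and `νᵢ` for the empirical measure of the other
players, so that `ν = (1 - 1/N) νᵢ + (1/N) δ_{xᵢ}`. Keeping `νᵢ` in place and spreading the
mass `1/N` sitting at `xᵢ` over `νᵢ` is a coupling of cost at most `diam X / N`, hence
`W₁(ν, νᵢ) ≤ diam X / N`. The modulus of continuity then makes `F(θᵢ, ·, ν)` and `F(θᵢ, ·, νᵢ)`
uniformly `ω(diam X / N)`-close, so the Nash property turns `xᵢ` into a `2 ω(diam X / N)`-minimiser
of `F(θᵢ, ·, ν)`; averaging over `i` gives the inequality.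
-/

open Finset

theorem transportCost_le_integral {Θ X : Type*} [MeasurableSpace Θ] [MeasurableSpace X]
    {c : Θ → X → ℝ} (hc : ∀ t x, 0 ≤ c t x) {μ : Measure Θ} {ν : Measure X}
    {γ : Measure (Θ × X)} (hγ : γ ∈ Couplings μ ν) :
    transportCost c μ ν ≤ ∫ p, c p.1 p.2 ∂γ :=
  csInf_le ⟨0, by rintro _ ⟨γ', -, rfl⟩; exact integral_nonneg fun p => hc p.1 p.2⟩ ⟨γ, hγ, rfl⟩

section MixtureCoupling

variable {X : Type*} [MeasurableSpace X]

noncomputable def mixtureCoupling (t : ℝ≥0∞) (ρ σ : Measure X) : Measure (X × X) :=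
  (1 - t) • ρ.map (fun x => (x, x)) + t • σ.prod ρ

variable {ρ σ : Measure X} [IsProbabilityMeasure ρ] [IsProbabilityMeasure σ] {t : ℝ≥0∞}

theorem mixtureCoupling_mem_couplings (ht : t ≤ 1) :
    mixtureCoupling t ρ σ ∈ Couplings ((1 - t) • ρ + t • σ) ρ := by
  have hdiag : Measurable fun x : X => (x, x) := measurable_id.prodMk measurable_id
  refine ⟨⟨?_⟩, ?_, ?_⟩
  · simp [mixtureCoupling, Measure.map_apply hdiag MeasurableSet.univ, tsub_add_cancel_of_le ht]
  · simp [mixtureCoupling, Measure.map_add _ _ measurable_fst, Measure.map_map measurable_fst hdiag,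
      Function.comp_def]
  · rw [mixtureCoupling, Measure.map_add _ _ measurable_snd, Measure.map_smul, Measure.map_smul,
      Measure.map_map measurable_snd hdiag, Measure.map_snd_prod, measure_univ, one_smul,
      show Prod.snd ∘ (fun x : X => (x, x)) = id from rfl, Measure.map_id, ← add_smul,
      tsub_add_cancel_of_le ht, one_smul]

variable [PseudoMetricSpace X] [OpensMeasurableSpace X] [SecondCountableTopology X] {D : ℝ}

theorem integral_dist_mixtureCoupling_le (ht : t ≠ ⊤) (hD : ∀ x y : X, dist x y ≤ D) :
    ∫ p, dist p.1 p.2 ∂(mixtureCoupling t ρ σ) ≤ t.toReal * D := by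
  have hdiag : Measurable fun x : X => (x, x) := measurable_id.prodMk measurable_id
  have hdist : Measurable fun p : X × X => dist p.1 p.2 := measurable_dist
  have hbound : ∀ p : X × X, ‖dist p.1 p.2‖ ≤ D := fun p => by simpa using hD p.1 p.2
  have hint : ∀ μ : Measure (X × X), IsFiniteMeasure μ → Integrable (fun p => dist p.1 p.2) μ :=
    fun μ _ => .of_bound hdist.aestronglyMeasurable D (.of_forall hbound)
  rw [mixtureCoupling, integral_add_measure ((hint _ inferInstance).smul_measure (by simp))
    ((hint _ inferInstance).smul_measure ht), integral_smul_measure, integral_smul_measure,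
    integral_map hdiag.aemeasurable hdist.aestronglyMeasurable]
  simp only [dist_self, integral_zero, smul_eq_mul, mul_zero, zero_add]
  refine mul_le_mul_of_nonneg_left ?_ ENNReal.toReal_nonneg
  calc _ ≤ ‖∫ p, dist p.1 p.2 ∂(σ.prod ρ)‖ := Real.le_norm_self _
    _ ≤ D := by simpa using norm_integral_le_of_norm_le_const (μ := σ.prod ρ) (.of_forall hbound)

theorem W1_mixture_le (ht : t ≤ 1) (hD : ∀ x y : X, dist x y ≤ D) :
    W1 ((1 - t) • ρ + t • σ) ρ ≤ t.toReal * D :=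
  (transportCost_le_integral (fun _ _ => dist_nonneg) (mixtureCoupling_mem_couplings ht)).trans
    (integral_dist_mixtureCoupling_le (ht.trans_lt ENNReal.one_lt_top).ne hD)

end MixtureCoupling

theorem ENNReal.one_sub_inv_mul_inv_sub_one {n : ℝ≥0∞} (h1 : 1 < n) (htop : n ≠ ⊤) :
    (1 - n⁻¹) * (n - 1)⁻¹ = n⁻¹ := by
  have hn : n ≠ 0 := (zero_lt_one.trans h1).ne'
  have hsub : 1 - n⁻¹ = n⁻¹ * (n - 1) := by
    rw [ENNReal.mul_sub fun _ _ => ENNReal.inv_ne_top.2 hn, ENNReal.inv_mul_cancel hn htop, mul_one]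
  rw [hsub, mul_assoc, ENNReal.mul_inv_cancel (tsub_pos_of_lt h1).ne' (ENNReal.sub_ne_top htop),
    mul_one]

section Empirical

variable {α ι : Type*} [MeasurableSpace α]

theorem integral_smul_sum_dirac [MeasurableSingletonClass α] (c : ℝ≥0∞) (s : Finset ι)
    (a : ι → α) (f : α → ℝ) :
    ∫ x, f x ∂(c • ∑ i ∈ s, Measure.dirac (a i)) = c.toReal * ∑ i ∈ s, f (a i) := by
  rw [integral_smul_measure, smul_eq_mul,
    integral_finsetSum_measure fun i _ => integrable_dirac enorm_lt_top]
  simp only [integral_dirac]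

theorem isProbabilityMeasure_smul_sum_dirac {s : Finset ι} {n : ℝ≥0∞} (hs : (#s : ℝ≥0∞) = n)
    (hn : n ≠ 0) (a : ι → α) :
    IsProbabilityMeasure (n⁻¹ • ∑ i ∈ s, Measure.dirac (a i)) :=
  ⟨by simp [hs, ENNReal.inv_mul_cancel hn (hs ▸ ENNReal.natCast_ne_top _)]⟩

variable {N : ℕ}

theorem isProbabilityMeasure_smul_sum_dirac_erase (hN : 2 ≤ N) (x : Fin N → α) (i : Fin N) :
    IsProbabilityMeasure (((N : ℝ≥0∞) - 1)⁻¹ • ∑ j ∈ univ.erase i, Measure.dirac (x j)) :=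
  isProbabilityMeasure_smul_sum_dirac (by simp [card_erase_of_mem])
    (tsub_pos_of_lt (by exact_mod_cast hN)).ne' x

theorem inv_smul_sum_dirac_eq_mixture (hN : 2 ≤ N) (x : Fin N → α) (i : Fin N) :
    (N : ℝ≥0∞)⁻¹ • ∑ j, Measure.dirac (x j) =
      (1 - (N : ℝ≥0∞)⁻¹) • (((N : ℝ≥0∞) - 1)⁻¹ • ∑ j ∈ univ.erase i, Measure.dirac (x j)) +
        (N : ℝ≥0∞)⁻¹ • Measure.dirac (x i) := by
  rw [smul_smul,
    ENNReal.one_sub_inv_mul_inv_sub_one (by exact_mod_cast hN) (ENNReal.natCast_ne_top N), ← smul_add,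
    add_comm, add_sum_erase univ (fun j => Measure.dirac (x j)) (mem_univ i)]

end Empirical

theorem W1_inv_smul_sum_dirac_erase_le {X : Type*} [PseudoMetricSpace X] [MeasurableSpace X]
    [OpensMeasurableSpace X] [SecondCountableTopology X] {N : ℕ} (hN : 2 ≤ N) (x : Fin N → X)
    (i : Fin N) {D : ℝ} (hD : ∀ x y : X, dist x y ≤ D) :
    W1 ((N : ℝ≥0∞)⁻¹ • ∑ j, Measure.dirac (x j))
      (((N : ℝ≥0∞) - 1)⁻¹ • ∑ j ∈ univ.erase i, Measure.dirac (x j)) ≤ D / N := by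
  have := isProbabilityMeasure_smul_sum_dirac_erase hN x i
  rw [inv_smul_sum_dirac_eq_mixture hN x i]
  have ht : (N : ℝ≥0∞)⁻¹ ≤ 1 := ENNReal.inv_le_one.2 (by exact_mod_cast (by omega : 1 ≤ N))
  exact (W1_mixture_le ht hD).trans_eq (by simp [div_eq_inv_mul])

theorem le_iInf_add_two_mul_of_abs_sub_le {X : Type*} {f g : X → ℝ} {x : X} {c : ℝ}
    (hx : ∀ y, g x ≤ g y) (hfg : ∀ y, |f y - g y| ≤ c) : f x ≤ (⨅ y, f y) + 2 * c := by
  have : ∀ y, f x - 2 * c ≤ f y := fun y => by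
    linarith [hx y, (abs_le.1 (hfg x)).2, (abs_le.1 (hfg y)).1]
  linarith [@le_ciInf _ _ _ ⟨x⟩ _ _ this]

theorem nash_integral_le_min_integral_add_eps_general
    {Θ X : Type*}
    [MetricSpace Θ] [MeasurableSpace Θ] [BorelSpace Θ]
    [MetricSpace X] [CompactSpace X] [MeasurableSpace X] [BorelSpace X]
    (N : ℕ) (hN : 2 ≤ N) (θ : Fin N → Θ)
    (F : Θ → X → Measure X → ℝ)
    (ω : ℝ → ℝ) (hω_mono : Monotone ω)
    (hF_mod : ∀ (t : Θ) (x : X) (ν ν' : Measure X),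
      IsProbabilityMeasure ν → IsProbabilityMeasure ν' →
      |F t x ν - F t x ν'| ≤ ω (W1 ν ν'))
    (xbar : Fin N → X)
    (hNash : ∀ i : Fin N, ∀ y : X,
      F (θ i) (xbar i)
          (((N : ℝ≥0∞) - 1)⁻¹ • ∑ j ∈ Finset.univ.erase i, Measure.dirac (xbar j)) ≤
        F (θ i) y
          (((N : ℝ≥0∞) - 1)⁻¹ • ∑ j ∈ Finset.univ.erase i, Measure.dirac (xbar j))) :
    ∫ p, F p.1 p.2 ((N : ℝ≥0∞)⁻¹ • ∑ i : Fin N, Measure.dirac (xbar i))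
        ∂((N : ℝ≥0∞)⁻¹ • ∑ i : Fin N, Measure.dirac (θ i, xbar i)) ≤
      (∫ t, (⨅ y : X, F t y ((N : ℝ≥0∞)⁻¹ • ∑ i : Fin N, Measure.dirac (xbar i)))
          ∂((N : ℝ≥0∞)⁻¹ • ∑ i : Fin N, Measure.dirac (θ i))) +
        2 * ω (Metric.diam (Set.univ : Set X) / N) := by
  set ν := (N : ℝ≥0∞)⁻¹ • ∑ i : Fin N, Measure.dirac (xbar i)
  set ε := ω (Metric.diam (Set.univ : Set X) / N)
  have hν : IsProbabilityMeasure ν :=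
    isProbabilityMeasure_smul_sum_dirac (by simp) (by simp; omega) xbar
  have hdiam (x y : X) : dist x y ≤ Metric.diam (Set.univ : Set X) :=
    Metric.dist_le_diam_of_mem isCompact_univ.isBounded trivial trivial
  have hplayer (i : Fin N) : F (θ i) (xbar i) ν ≤ (⨅ y, F (θ i) y ν) + 2 * ε :=
    le_iInf_add_two_mul_of_abs_sub_le (f := fun y => F (θ i) y ν) (hNash i) fun y =>
      (hF_mod _ _ _ _ hν (isProbabilityMeasure_smul_sum_dirac_erase hN xbar i)).trans
        (hω_mono (W1_inv_smul_sum_dirac_erase_le hN xbar i hdiam))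
  rw [integral_smul_sum_dirac, integral_smul_sum_dirac]
  calc (N : ℝ≥0∞)⁻¹.toReal * ∑ i, F (θ i) (xbar i) ν
      ≤ (N : ℝ≥0∞)⁻¹.toReal * ∑ i, ((⨅ y, F (θ i) y ν) + 2 * ε) := by
        gcongr with i; exact hplayer i
    _ = _ := by simp [sum_add_distrib, mul_add]; field_simp

/-- **The key inequality in the passage from Nash to Cournot-Nash.**
If `x̄^N` is a Nash equilibrium of the game with costs
`Jᵢ^N(x) = F(θᵢ, xᵢ, (1/(N-1)) Σ_{j≠i} δ_{xⱼ})`, where `F` admits `ω` as modulus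
of continuity in its measure argument (w.r.t. `W₁`), uniformly in the first two
arguments, then with the empirical measures `μ^N, ν^N, γ^N` one has
`∫ F(θ, x, ν^N) dγ^N ≤ ∫ min_y F(θ, y, ν^N) dμ^N + ε_N`, `ε_N = 2 ω(diam X / N)`. -/
theorem nash_integral_le_min_integral_add_eps
    {Θ X : Type*}
    [MetricSpace Θ] [CompactSpace Θ] [MeasurableSpace Θ] [BorelSpace Θ]
    [MetricSpace X] [CompactSpace X] [MeasurableSpace X] [BorelSpace X]
    (N : ℕ) (hN : 2 ≤ N) (θ : Fin N → Θ)
    (F : Θ → X → Measure X → ℝ)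
    (ω : ℝ → ℝ) (hω_mono : Monotone ω) (hω_zero : ω 0 = 0)
    (hF_mod : ∀ (t : Θ) (x : X) (ν ν' : Measure X),
      IsProbabilityMeasure ν → IsProbabilityMeasure ν' →
      |F t x ν - F t x ν'| ≤ ω (W1 ν ν'))
    (xbar : Fin N → X)
    (hNash : ∀ i : Fin N, ∀ y : X,
      F (θ i) (xbar i)
          (((N : ℝ≥0∞) - 1)⁻¹ • ∑ j ∈ Finset.univ.erase i, Measure.dirac (xbar j)) ≤
        F (θ i) y
          (((N : ℝ≥0∞) - 1)⁻¹ • ∑ j ∈ Finset.univ.erase i, Measure.dirac (xbar j))) :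
    ∫ p, F p.1 p.2 ((N : ℝ≥0∞)⁻¹ • ∑ i : Fin N, Measure.dirac (xbar i))
        ∂((N : ℝ≥0∞)⁻¹ • ∑ i : Fin N, Measure.dirac (θ i, xbar i)) ≤
      (∫ t, (⨅ y : X, F t y ((N : ℝ≥0∞)⁻¹ • ∑ i : Fin N, Measure.dirac (xbar i)))
          ∂((N : ℝ≥0∞)⁻¹ • ∑ i : Fin N, Measure.dirac (θ i))) +
        2 * ω (Metric.diam (Set.univ : Set X) / N) :=
  nash_integral_le_min_integral_add_eps_general N hN θ F ω hω_mono hF_mod xbar hNash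
end

section
/- Let X be a compact metric space, N ≥ 2, K > 0, and let G : X^{N−1} → ℝ be symmetric and satisfy |G(x_{-i}) − G(y_{-i})| ≤ K W_1((1/(N−1)) Σ_{j≠i} δ_{x_j}, (1/(N−1)) Σ_{j≠i} δ_{y_j}) for all x_{-i}, y_{-i} ∈ X^{N−1}. Then for all (π_j)_{j≠i}, (η_j)_{j≠i} in P(X)^{N−1}: |∫_{X^{N−1}} G ⊗_{j≠i} π_j(dx_j) − ∫_{X^{N−1}} G ⊗_{j≠i} η_j(dx_j)| ≤ K min_{σ ∈ S_{N−1}} (1/(N−1)) Σ_{j≠i} W_1(π_j, η_{σ(j)}), where S_{N−1} is the set of permutations of the indices j ≠ i. -/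
open MeasureTheory
open scoped ENNReal NNReal

/-!
Couple each `p j` with `q (σ j)` almost optimally. The product of these couplings couples the
product measures, and pairing `z j` with `w j` shows that the empirical `W₁` distance is at most the
mean of the coordinate distances, so `G` is Lipschitz for the sum of coordinate distances and the
difference of the integrals is bounded by `K / n` times the sum of the coordinate transport costs.
Symmetry of `G` makes the integral against `⊗ⱼ q (σ j)` independent of `σ`.
-/

open Filter Topology

section Couplings

variable {X : Type*} [MeasurableSpace X]

lemma prod_mem_couplings (μ ν : Measure X) [IsProbabilityMeasure μ] [IsProbabilityMeasure ν] :
    μ.prod ν ∈ Couplings μ ν :=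
  ⟨inferInstance, by simp, by simp⟩

lemma map_pi_mem_couplings {ι : Type*} [Fintype ι] {μ ν : ι → Measure X}
    {γ : ι → Measure (X × X)} (hγ : ∀ j, γ j ∈ Couplings (μ j) (ν j)) :
    (Measure.pi γ).map (fun z => (fun j => (z j).1, fun j => (z j).2)) ∈
      Couplings (Measure.pi μ) (Measure.pi ν) := by
  have := fun j => (hγ j).1
  refine ⟨Measure.isProbabilityMeasure_map (by fun_prop), ?_, ?_⟩
  · rw [Measure.map_map measurable_fst (by fun_prop), ← funext fun j => (hγ j).2.1]
    exact Measure.pi_map_pi fun _ => measurable_fst.aemeasurable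
  · rw [Measure.map_map measurable_snd (by fun_prop), ← funext fun j => (hγ j).2.2]
    exact Measure.pi_map_pi fun _ => measurable_snd.aemeasurable

lemma integral_sub_integral_eq_of_mem_couplings {E : Type*} [NormedAddCommGroup E]
    [NormedSpace ℝ E] {μ ν : Measure X} {γ : Measure (X × X)} (hγ : γ ∈ Couplings μ ν)
    {f : X → E} (hμ : Integrable f μ) (hν : Integrable f ν) :
    ∫ x, f x ∂μ - ∫ x, f x ∂ν = ∫ x, (f x.1 - f x.2) ∂γ := by
  obtain ⟨-, rfl, rfl⟩ := hγ
  rw [integral_map measurable_fst.aemeasurable hμ.1, integral_map measurable_snd.aemeasurable hν.1]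
  exact (integral_sub (hμ.comp_measurable measurable_fst) (hν.comp_measurable measurable_snd)).symm

variable [PseudoMetricSpace X]

lemma W1_le_integral_dist_of_mem_couplings {μ ν : Measure X} {γ : Measure (X × X)}
    (hγ : γ ∈ Couplings μ ν) : W1 μ ν ≤ ∫ x, dist x.1 x.2 ∂γ :=
  csInf_le ⟨0, by rintro _ ⟨γ, -, rfl⟩; exact integral_nonneg fun _ => dist_nonneg⟩ ⟨γ, hγ, rfl⟩

lemma exists_mem_couplings_integral_dist_lt (μ ν : Measure X) [IsProbabilityMeasure μ]
    [IsProbabilityMeasure ν] {ε : ℝ} (hε : 0 < ε) :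
    ∃ γ ∈ Couplings μ ν, ∫ x, dist x.1 x.2 ∂γ < W1 μ ν + ε := by
  obtain ⟨_, ⟨γ, hγ, rfl⟩, hlt⟩ := exists_lt_of_csInf_lt (s := (fun γ => ∫ x, dist x.1 x.2 ∂γ) ''
    Couplings μ ν) ⟨_, _, prod_mem_couplings μ ν, rfl⟩ (lt_add_of_pos_right (W1 μ ν) hε)
  exact ⟨γ, hγ, hlt⟩

lemma W1_empirical_le_mean_dist [MeasurableSingletonClass X] {ι : Type*} [Fintype ι]
    [Nonempty ι] (z w : ι → X) :
    W1 ((Fintype.card ι : ℝ≥0∞)⁻¹ • ∑ j, Measure.dirac (z j))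
        ((Fintype.card ι : ℝ≥0∞)⁻¹ • ∑ j, Measure.dirac (w j)) ≤
      (Fintype.card ι : ℝ)⁻¹ * ∑ j, dist (z j) (w j) := by
  set γ : Measure (X × X) := (Fintype.card ι : ℝ≥0∞)⁻¹ • ∑ j, Measure.dirac (z j, w j)
  have hγ : γ ∈ Couplings ((Fintype.card ι : ℝ≥0∞)⁻¹ • ∑ j, Measure.dirac (z j))
      ((Fintype.card ι : ℝ≥0∞)⁻¹ • ∑ j, Measure.dirac (w j)) := by
    refine ⟨⟨?_⟩, ?_, ?_⟩
    · simp [γ, ENNReal.inv_mul_cancel]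
    all_goals
      rw [Measure.map_smul, Measure.map_finset_sum (by fun_prop)]
      simp
  refine (W1_le_integral_dist_of_mem_couplings hγ).trans_eq ?_
  rw [integral_smul_measure, integral_finsetSum_measure fun j _ => integrable_dirac (by simp)]
  simp [integral_dirac, ENNReal.toReal_inv]

end Couplings

section ProductIntegrals

variable {ι X : Type*} [Fintype ι] [PseudoMetricSpace X]

lemma continuous_of_abs_sub_le_mul_sum_dist {L : ℝ} (hL : 0 ≤ L) {G : (ι → X) → ℝ}
    (hG : ∀ z w, |G z - G w| ≤ L * ∑ j, dist (z j) (w j)) : Continuous G := by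
  refine (LipschitzWith.of_dist_le_mul fun z w => ?_ : LipschitzWith
    ⟨L * Fintype.card ι, by positivity⟩ G).continuous
  calc dist (G z) (G w) ≤ L * ∑ j, dist (z j) (w j) := hG z w
    _ ≤ L * ∑ _j : ι, dist z w :=
      mul_le_mul_of_nonneg_left (Finset.sum_le_sum fun j _ => dist_le_pi_dist z w j) hL
    _ = L * Fintype.card ι * dist z w := by simp [mul_assoc]

variable [CompactSpace X] [MeasurableSpace X] [BorelSpace X]

lemma integral_sum_dist_map_pi (γ : ι → Measure (X × X)) [∀ j, IsProbabilityMeasure (γ j)] :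
    ∫ x, ∑ j, dist (x.1 j) (x.2 j) ∂(Measure.pi γ).map
        (fun z => (fun j => (z j).1, fun j => (z j).2)) =
      ∑ j, ∫ x, dist x.1 x.2 ∂γ j := by
  rw [integral_map (by fun_prop) (by fun_prop), integral_finsetSum _ fun j _ =>
    (by fun_prop : Continuous fun z : ι → X × X => dist (z j).1 (z j).2)
      |>.integrable_of_hasCompactSupport (.of_compactSpace _)]
  exact Finset.sum_congr rfl fun j _ => integral_comp_eval (μ := γ) (i := j)
    (by fun_prop : Continuous fun x : X × X => dist x.1 x.2).aestronglyMeasurable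

lemma abs_integral_pi_sub_le_of_mem_couplings {L : ℝ} (hL : 0 ≤ L) {G : (ι → X) → ℝ}
    (hG : ∀ z w, |G z - G w| ≤ L * ∑ j, dist (z j) (w j)) {μ ν : ι → Measure X}
    [∀ j, IsProbabilityMeasure (μ j)] [∀ j, IsProbabilityMeasure (ν j)]
    {γ : ι → Measure (X × X)} (hγ : ∀ j, γ j ∈ Couplings (μ j) (ν j)) :
    |∫ z, G z ∂Measure.pi μ - ∫ z, G z ∂Measure.pi ν| ≤ L * ∑ j, ∫ x, dist x.1 x.2 ∂γ j := by
  have := fun j => (hγ j).1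
  have hGc := continuous_of_abs_sub_le_mul_sum_dist hL hG
  have hint : ∀ (m : Measure (ι → X)) [IsFiniteMeasure m], Integrable G m := fun m _ =>
    hGc.integrable_of_hasCompactSupport (.of_compactSpace G)
  rw [integral_sub_integral_eq_of_mem_couplings (map_pi_mem_couplings hγ) (hint _) (hint _),
    ← integral_sum_dist_map_pi, ← integral_const_mul, ← Real.norm_eq_abs]
  refine norm_integral_le_of_norm_le ?_ (.of_forall fun x => hG x.1 x.2)
  exact (by fun_prop : Continuous fun x : (ι → X) × (ι → X) =>
    L * ∑ j, dist (x.1 j) (x.2 j)).integrable_of_hasCompactSupport (.of_compactSpace _)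

theorem abs_integral_pi_sub_le_mul_sum_W1 {L : ℝ} (hL : 0 ≤ L) {G : (ι → X) → ℝ}
    (hG : ∀ z w, |G z - G w| ≤ L * ∑ j, dist (z j) (w j)) (μ ν : ι → Measure X)
    [∀ j, IsProbabilityMeasure (μ j)] [∀ j, IsProbabilityMeasure (ν j)] :
    |∫ z, G z ∂Measure.pi μ - ∫ z, G z ∂Measure.pi ν| ≤ L * ∑ j, W1 (μ j) (ν j) := by
  have hδ : ∀ δ > 0, |∫ z, G z ∂Measure.pi μ - ∫ z, G z ∂Measure.pi ν| ≤
      L * ∑ j, (W1 (μ j) (ν j) + δ) := fun δ hδ => by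
    choose γ hγ hlt using fun j => exists_mem_couplings_integral_dist_lt (μ j) (ν j) hδ
    exact (abs_integral_pi_sub_le_of_mem_couplings hL hG hγ).trans
      (mul_le_mul_of_nonneg_left (Finset.sum_le_sum fun j _ => (hlt j).le) hL)
  have hlim : Tendsto (fun δ => L * ∑ j, (W1 (μ j) (ν j) + δ)) (𝓝[>] 0)
      (𝓝 (L * ∑ j, W1 (μ j) (ν j))) := by
    simpa using ((by fun_prop : Continuous fun δ : ℝ => L * ∑ j, (W1 (μ j) (ν j) + δ)).tendsto
      0).mono_left nhdsWithin_le_nhds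
  exact ge_of_tendsto hlim (eventually_nhdsWithin_of_forall hδ)

end ProductIntegrals

lemma integral_pi_comp_perm {ι X E : Type*} [Fintype ι] [MeasurableSpace X]
    [NormedAddCommGroup E] [NormedSpace ℝ E] {G : (ι → X) → E} (σ : Equiv.Perm ι)
    (hG : ∀ z, G (z ∘ σ) = G z) (μ : ι → Measure X) [∀ j, SigmaFinite (μ j)] :
    ∫ z, G z ∂Measure.pi (fun j => μ (σ j)) = ∫ z, G z ∂Measure.pi μ := by
  rw [← ((measurePreserving_piCongrLeft μ σ).integral_comp
    (MeasurableEquiv.piCongrLeft (fun _ => X) σ).measurableEmbedding G)]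
  refine integral_congr_ae (.of_forall fun z => ?_)
  rw [MeasurableEquiv.coe_piCongrLeft]
  exact (congrArg G <| funext fun j =>
    (Equiv.piCongrLeft_apply_apply (fun _ => X) σ z j).symm).trans (hG _)

/-- **Estimate on product integrals of symmetric empirical-Lipschitz functions.**
If `G : X^{N-1} → ℝ` (here `n = N - 1 ≥ 1`) is symmetric and satisfies
`|G z - G w| ≤ K W₁(emp z, emp w)` where `emp z = (1/n) Σⱼ δ_{zⱼ}`, then for all
probability measures `(pⱼ)`, `(qⱼ)` on `X`,
`|∫ G d(⊗ⱼ pⱼ) - ∫ G d(⊗ⱼ qⱼ)| ≤ K min_σ (1/n) Σⱼ W₁(pⱼ, q_{σ(j)})`. -/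
theorem abs_integral_pi_sub_le_min_perm
    {X : Type*} [MetricSpace X] [CompactSpace X] [MeasurableSpace X] [BorelSpace X]
    (n : ℕ) (hn : 1 ≤ n) (K : ℝ) (hK : 0 < K)
    (G : (Fin n → X) → ℝ)
    (hsym : ∀ (σ : Equiv.Perm (Fin n)) (z : Fin n → X), G (z ∘ σ) = G z)
    (hG : ∀ z w : Fin n → X,
      |G z - G w| ≤ K * W1 ((n : ℝ≥0∞)⁻¹ • ∑ j : Fin n, Measure.dirac (z j))
                           ((n : ℝ≥0∞)⁻¹ • ∑ j : Fin n, Measure.dirac (w j)))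
    (p q : Fin n → Measure X)
    (hp : ∀ j, IsProbabilityMeasure (p j)) (hq : ∀ j, IsProbabilityMeasure (q j)) :
    |(∫ z, G z ∂(Measure.pi p)) - ∫ z, G z ∂(Measure.pi q)| ≤
      K * ⨅ σ : Equiv.Perm (Fin n), (n : ℝ)⁻¹ * ∑ j : Fin n, W1 (p j) (q (σ j)) := by
  have : Nonempty (Fin n) := Fin.pos_iff_nonempty.mp hn
  have hGL : ∀ z w : Fin n → X, |G z - G w| ≤ K * (n : ℝ)⁻¹ * ∑ j, dist (z j) (w j) :=
    fun z w => (hG z w).trans <| by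
      simpa [mul_assoc] using mul_le_mul_of_nonneg_left (W1_empirical_le_mean_dist z w) hK.le
  obtain ⟨σ, hσ⟩ := exists_eq_ciInf_of_finite
    (f := fun σ : Equiv.Perm (Fin n) => (n : ℝ)⁻¹ * ∑ j, W1 (p j) (q (σ j)))
  rw [← hσ, ← integral_pi_comp_perm σ (hsym σ) q, ← mul_assoc]
  exact abs_integral_pi_sub_le_mul_sum_W1 (by positivity) hGL p fun j => q (σ j)
end

section
/- Let Θ and X be compact metric spaces, c : Θ × X → ℝ continuous, and V : P(X) × X → ℝ such that V(ν,·) is bounded and Borel measurable for each ν. Set F(θ,x,ν) := c(θ,x) + V(ν,x). If γ is a Cournot-Nash equilibrium for F and μ, and ν denotes the second marginal of γ, then γ is an optimal transport plan between μ and ν for the cost c: γ ∈ Π(μ,ν) and ∫_{Θ×X} c dγ = W_c(μ,ν) = inf_{γ' ∈ Π(μ,ν)} ∫_{Θ×X} c dγ'. -/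
/-!
Disintegrate a competing plan `γ'` as `μ ⊗ κ`. For `γ`-almost every `(θ, x)` the action `x`
minimises `y ↦ c(θ, y) + V(ν, y)`, so its cost is at most the `κ θ`-average of that function;
integrating over `θ ~ μ` gives `∫ (c + V ν) dγ ≤ ∫ (c + V ν) dγ'`. Both plans have second
marginal `ν`, so the `V`-terms agree and `∫ c dγ ≤ ∫ c dγ'`.
-/

open MeasureTheory ProbabilityTheory

namespace MeasureTheory

/-- `s` may be non-measurable (only of full outer measure); measurability of `p` suffices. -/
theorem ae_of_measure_eq_univ_of_ae_imp {α : Type*} [MeasurableSpace α] {μ : Measure α}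
    [IsFiniteMeasure μ] {s : Set α} {p : α → Prop} (hp : MeasurableSet {a | p a})
    (hs : μ s = μ Set.univ) (h : ∀ᵐ a ∂μ, a ∈ s → p a) : ∀ᵐ a ∂μ, p a :=
  (ae_iff_measure_eq hp.nullMeasurableSet).2 <|
    le_antisymm (measure_mono (Set.subset_univ _)) (hs ▸ measure_mono_ae h)

theorem Integrable.integral_measure_compProd {α β : Type*} [MeasurableSpace α]
    [MeasurableSpace β] {μ : Measure α} [SFinite μ] {κ : Kernel α β} [IsSFiniteKernel κ]
    {f : α × β → ℝ} (hf : Integrable f (μ ⊗ₘ κ)) :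
    Integrable (fun a => ∫ b, f (a, b) ∂κ a) μ := by
  simpa using
    Integrable.integral_compProd (κ := Kernel.const Unit μ) (η := Kernel.prodMkLeft Unit κ) hf

section Minimizers

variable {Θ X : Type*} [MeasurableSpace Θ] [MeasurableSpace X]

theorem integral_le_of_fst_eq_of_minimizes_snd [StandardBorelSpace X] [Nonempty X]
    {g : Θ × X → ℝ} (hg : Measurable g) {γ γ' : Measure (Θ × X)}
    [IsFiniteMeasure γ] [IsFiniteMeasure γ']
    (hfst : γ.fst = γ'.fst) (hγ : Integrable g γ) (hγ' : Integrable g γ')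
    (hmin : γ {p | ∀ y, g p ≤ g (p.1, y)} = γ Set.univ) :
    ∫ p, g p ∂γ ≤ ∫ p, g p ∂γ' := by
  set κ := γ'.condKernel
  set G : Θ → ℝ := fun θ => ∫ y, g (θ, y) ∂κ θ
  have hGm : Measurable G := hg.stronglyMeasurable.integral_kernel_prod_right'.measurable
  have hdis : γ'.fst ⊗ₘ κ = γ' := γ'.disintegrate κ
  have hint : Integrable g (γ'.fst ⊗ₘ κ) := by rw [hdis]; exact hγ'
  have hGint : Integrable G γ.fst := hfst ▸ hint.integral_measure_compProd
  have hsections : ∀ᵐ θ ∂γ.fst, Integrable (fun y => g (θ, y)) (κ θ) :=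
    hfst ▸ ((Measure.integrable_compProd_iff hint.1).1 hint).1
  have hle : ∀ᵐ p ∂γ, g p ≤ G p.1 := by
    refine ae_of_measure_eq_univ_of_ae_imp
      (measurableSet_le hg (hGm.comp measurable_fst)) hmin ?_
    filter_upwards [ae_of_ae_map measurable_fst.aemeasurable hsections] with p hp hpmin
    calc g p = ∫ _, g p ∂κ p.1 := by simp
      _ ≤ G p.1 := integral_mono (integrable_const _) hp hpmin
  calc ∫ p, g p ∂γ ≤ ∫ p, G p.1 ∂γ :=
        integral_mono_ae hγ (hGint.comp_measurable measurable_fst) hle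
    _ = ∫ θ, G θ ∂γ'.fst := by
      rw [← hfst, Measure.fst, integral_map measurable_fst.aemeasurable hGm.aestronglyMeasurable]
    _ = ∫ p, g p ∂γ' := by rw [← Measure.integral_compProd hint, hdis]

theorem integral_le_of_marginals_eq_of_minimizes_add_snd [StandardBorelSpace X] [Nonempty X]
    {c : Θ × X → ℝ} {v : X → ℝ} (hc : Measurable c) (hv : Measurable v) {γ γ' : Measure (Θ × X)}
    [IsFiniteMeasure γ] [IsFiniteMeasure γ'] (hfst : γ.fst = γ'.fst) (hsnd : γ.snd = γ'.snd)
    (hcγ : Integrable c γ) (hcγ' : Integrable c γ') (hvγ : Integrable v γ.snd)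
    (hmin : γ {p | ∀ y, c p + v p.2 ≤ c (p.1, y) + v y} = γ Set.univ) :
    ∫ p, c p ∂γ ≤ ∫ p, c p ∂γ' := by
  have hvγ' : Integrable v γ'.snd := hsnd ▸ hvγ
  have hv_eq : ∫ p, v p.2 ∂γ = ∫ p, v p.2 ∂γ' := by
    rw [← integral_map measurable_snd.aemeasurable hv.aestronglyMeasurable,
      ← integral_map measurable_snd.aemeasurable hv.aestronglyMeasurable]
    exact congrArg (fun ρ => ∫ x, v x ∂ρ) hsnd
  have hvγ₂ : Integrable (fun p => v p.2) γ := hvγ.comp_measurable measurable_snd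
  have hvγ₂' : Integrable (fun p => v p.2) γ' := hvγ'.comp_measurable measurable_snd
  have h : ∫ p, c p + v p.2 ∂γ ≤ ∫ p, c p + v p.2 ∂γ' :=
    integral_le_of_fst_eq_of_minimizes_snd (hc.add (hv.comp measurable_snd)) hfst
      (hcγ.add hvγ₂) (hcγ'.add hvγ₂') hmin
  rw [integral_add hcγ hvγ₂, integral_add hcγ' hvγ₂'] at h
  linarith

end Minimizers

end MeasureTheory

/-- **A Cournot-Nash equilibrium is an optimal transport plan.**
In the separable case `F(θ,x,ν) = c(θ,x) + V(ν,x)` with `c` continuous and `V(ν,·)`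
bounded and Borel measurable, if `γ` is a Cournot-Nash equilibrium for `F` and `μ`
and `ν` denotes its second marginal, then `γ ∈ Π(μ,ν)` and
`∫ c dγ = W_c(μ,ν) = inf_{γ' ∈ Π(μ,ν)} ∫ c dγ'`. -/
theorem cournotNash_is_optimal_plan
    {Θ X : Type*}
    [MetricSpace Θ] [CompactSpace Θ] [MeasurableSpace Θ] [BorelSpace Θ]
    [MetricSpace X] [CompactSpace X] [MeasurableSpace X] [BorelSpace X]
    (c : Θ → X → ℝ) (hc : Continuous fun p : Θ × X => c p.1 p.2)
    (V : Measure X → X → ℝ)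
    (hVmeas : ∀ ν : Measure X, Measurable (V ν))
    (hVbdd : ∀ ν : Measure X, ∃ M : ℝ, ∀ x : X, |V ν x| ≤ M)
    (μ : Measure Θ) (γ : Measure (Θ × X)) [IsProbabilityMeasure γ]
    (hμ : γ.map Prod.fst = μ)
    (hCN : γ {p : Θ × X | ∀ y : X,
      c p.1 p.2 + V (γ.map Prod.snd) p.2 ≤ c p.1 y + V (γ.map Prod.snd) y} = 1) :
    γ ∈ Couplings μ (γ.map Prod.snd) ∧
      ∫ p, c p.1 p.2 ∂γ = transportCost c μ (γ.map Prod.snd) := by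
  set ν := γ.map Prod.snd
  have : Nonempty X := (nonempty_of_isProbabilityMeasure γ).map Prod.snd
  have hγ : γ ∈ Couplings μ ν := ⟨inferInstance, hμ, rfl⟩
  obtain ⟨C, hC⟩ := isCompact_univ.exists_bound_of_continuousOn hc.continuousOn
  obtain ⟨M, hM⟩ := hVbdd ν
  have hcint (ρ : Measure (Θ × X)) [IsFiniteMeasure ρ] : Integrable (fun p => c p.1 p.2) ρ :=
    .of_bound hc.measurable.aestronglyMeasurable C (ae_of_all _ fun p => hC p trivial)
  have hVint : Integrable (V ν) ν := .of_bound (hVmeas ν).aestronglyMeasurable M (ae_of_all _ hM)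
  suffices IsLeast ((fun ρ => ∫ p, c p.1 p.2 ∂ρ) '' Couplings μ ν) (∫ p, c p.1 p.2 ∂γ) from
    ⟨hγ, this.csInf_eq.symm⟩
  refine ⟨⟨γ, hγ, rfl⟩, ?_⟩
  rintro _ ⟨γ', ⟨hγ', hfst, hsnd⟩, rfl⟩
  exact integral_le_of_marginals_eq_of_minimizes_add_snd hc.measurable (hVmeas ν)
    (hμ.trans hfst.symm) hsnd.symm (hcint γ) (hcint γ') hVint (hCN.trans measure_univ.symm)
end

section
/- Let X be a compact metric space equipped with a reference Borel probability measure m_0, let f : X × [0,∞) → ℝ be continuous with f(x,·) nondecreasing, and let φ : X × X → ℝ be continuous and symmetric (φ(x,y) = φ(y,x)). For ν ∈ P(X) absolutely continuous with respect to m_0 with density also denoted ν, define V(ν,x) := f(x, ν(x)) + ∫_X φ(x,y) ν(dy), and define the energy J(ν) := ∫_X F(x, ν(x)) m_0(dx) + (1/2) ∫_{X×X} φ(x,y) ν(dx) ν(dy), where F(x,t) := ∫_0^t f(x,s) ds. Let ν, ν' ∈ P(X) be absolutely continuous with respect to m_0 with bounded densities. Then the function t ↦ J(ν + t(ν'−ν))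 is right-differentiable at t = 0 with derivative ∫_X V(ν,x) (ν'−ν)(dx); i.e. V(ν,·) is the first variation of J at ν. -/
/-!
The internal energy is differentiated under the integral sign: after extending `f` to negative
arguments by `f x (max s 0)` (harmless for `t ∈ [0, 1]`, where `ν_t ≥ 0`), the `t`-derivative
`f(x, ν_t(x)) (ν' - ν)(x)` of the integrand is bounded uniformly in `x` and in `t` near `0`,
because the densities are bounded and `f` is bounded on the compact strip `X × [-R, R]`.
The interaction energy of `ν + t(ν' - ν)` is a quadratic polynomial in `t`; by Fubini and the
symmetry of `φ` its two cross terms coincide, so its linear coefficient is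
`2 ∫∫ φ(x,y) ν(dy) (ν' - ν)(dx)`.
-/

open MeasureTheory Set Function

section Interaction

variable {X : Type*} [MeasurableSpace X] {μ : Measure X} [IsFiniteMeasure μ] {φ : X → X → ℝ}
  {u v : X → ℝ} {Cφ Cu Cv : ℝ}

noncomputable def interactionEnergy (μ : Measure X) (φ : X → X → ℝ) (g : X → ℝ) : ℝ :=
  ∫ x, (∫ y, φ x y * g y ∂μ) * g x ∂μ

lemma integrable_kernel_mul_mul (hφ : StronglyMeasurable (uncurry φ))
    (hφC : ∀ x y, |φ x y| ≤ Cφ) (hu : Measurable u) (huC : ∀ x, |u x| ≤ Cu)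
    (hv : Measurable v) (hvC : ∀ x, |v x| ≤ Cv) :
    Integrable (fun p : X × X => φ p.1 p.2 * u p.2 * v p.1) (μ.prod μ) := by
  refine Integrable.of_bound ((hφ.measurable.mul (hu.comp measurable_snd)).mul
    (hv.comp measurable_fst)).aestronglyMeasurable (Cφ * Cu * Cv) (ae_of_all _ fun p => ?_)
  have hφ0 : 0 ≤ Cφ := (abs_nonneg _).trans (hφC p.1 p.2)
  have hu0 : 0 ≤ Cu := (abs_nonneg _).trans (huC p.1)
  simp only [Real.norm_eq_abs, abs_mul]
  gcongr
  exacts [hφC _ _, huC _, hvC _]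

lemma integral_potential_mul_eq_integral_prod (hφ : StronglyMeasurable (uncurry φ))
    (hφC : ∀ x y, |φ x y| ≤ Cφ) (hu : Measurable u) (huC : ∀ x, |u x| ≤ Cu)
    (hv : Measurable v) (hvC : ∀ x, |v x| ≤ Cv) :
    ∫ x, (∫ y, φ x y * u y ∂μ) * v x ∂μ = ∫ p, φ p.1 p.2 * u p.2 * v p.1 ∂μ.prod μ := by
  rw [integral_prod _ (integrable_kernel_mul_mul hφ hφC hu huC hv hvC)]
  simp only [integral_mul_const]

lemma integrable_potential_mul (hφ : StronglyMeasurable (uncurry φ))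
    (hφC : ∀ x y, |φ x y| ≤ Cφ) (hu : Measurable u) (huC : ∀ x, |u x| ≤ Cu)
    (hv : Measurable v) (hvC : ∀ x, |v x| ≤ Cv) :
    Integrable (fun x => (∫ y, φ x y * u y ∂μ) * v x) μ := by
  simpa only [integral_mul_const] using
    (integrable_kernel_mul_mul (μ := μ) hφ hφC hu huC hv hvC).integral_prod_left

lemma integral_potential_mul_comm (hφ : StronglyMeasurable (uncurry φ))
    (hφC : ∀ x y, |φ x y| ≤ Cφ) (hφ_symm : ∀ x y, φ x y = φ y x)
    (hu : Measurable u) (huC : ∀ x, |u x| ≤ Cu) (hv : Measurable v) (hvC : ∀ x, |v x| ≤ Cv) :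
    ∫ x, (∫ y, φ x y * v y ∂μ) * u x ∂μ = ∫ x, (∫ y, φ x y * u y ∂μ) * v x ∂μ := by
  rw [integral_potential_mul_eq_integral_prod hφ hφC hv hvC hu huC,
    integral_potential_mul_eq_integral_prod hφ hφC hu huC hv hvC, ← integral_prod_swap]
  simp only [Prod.fst_swap, Prod.snd_swap, hφ_symm _ _]
  congr 1
  ext p
  ring

lemma interactionEnergy_add_mul (hφ : StronglyMeasurable (uncurry φ))
    (hφC : ∀ x y, |φ x y| ≤ Cφ) (hφ_symm : ∀ x y, φ x y = φ y x)
    (hu : Measurable u) (huC : ∀ x, |u x| ≤ Cu) (hv : Measurable v) (hvC : ∀ x, |v x| ≤ Cv)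
    (t : ℝ) :
    interactionEnergy μ φ (fun x => u x + t * v x) = interactionEnergy μ φ u
      + t * (2 * ∫ x, (∫ y, φ x y * u y ∂μ) * v x ∂μ) + t ^ 2 * interactionEnergy μ φ v := by
  have hw : Measurable fun x => u x + t * v x := hu.add (hv.const_mul t)
  have hwC : ∀ x, |u x + t * v x| ≤ Cu + |t| * Cv := fun x =>
    (abs_add_le _ _).trans (add_le_add (huC x) (by rw [abs_mul]; gcongr; exact hvC x))
  have hint := fun {u v : X → ℝ} {Cu Cv : ℝ} (hu : Measurable u) (huC : ∀ x, |u x| ≤ Cu)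
      (hv : Measurable v) (hvC : ∀ x, |v x| ≤ Cv) =>
    integrable_kernel_mul_mul (μ := μ) hφ hφC hu huC hv hvC
  rw [two_mul, mul_add]
  nth_rw 2 [← integral_potential_mul_comm hφ hφC hφ_symm hu huC hv hvC]
  simp only [interactionEnergy]
  rw [integral_potential_mul_eq_integral_prod hφ hφC hw hwC hw hwC,
    integral_potential_mul_eq_integral_prod hφ hφC hu huC hu huC,
    integral_potential_mul_eq_integral_prod hφ hφC hu huC hv hvC,
    integral_potential_mul_eq_integral_prod hφ hφC hv hvC hu huC,
    integral_potential_mul_eq_integral_prod hφ hφC hv hvC hv hvC,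
    ← integral_const_mul, ← integral_const_mul, ← integral_const_mul, ← add_assoc,
    ← integral_add (hint hu huC hu huC) ((hint hu huC hv hvC).const_mul t),
    ← integral_add _ ((hint hv hvC hu huC).const_mul t),
    ← integral_add _ ((hint hv hvC hv hvC).const_mul _)]
  · congr 1
    ext p
    ring
  · exact ((hint hu huC hu huC).add ((hint hu huC hv hvC).const_mul t)).add
      ((hint hv hvC hu huC).const_mul t)
  · exact (hint hu huC hu huC).add ((hint hu huC hv hvC).const_mul t)

lemma hasDerivAt_interactionEnergy_add_mul (hφ : StronglyMeasurable (uncurry φ))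
    (hφC : ∀ x y, |φ x y| ≤ Cφ) (hφ_symm : ∀ x y, φ x y = φ y x)
    (hu : Measurable u) (huC : ∀ x, |u x| ≤ Cu) (hv : Measurable v) (hvC : ∀ x, |v x| ≤ Cv) :
    HasDerivAt (fun t => interactionEnergy μ φ (fun x => u x + t * v x))
      (2 * ∫ x, (∫ y, φ x y * u y ∂μ) * v x ∂μ) 0 := by
  simp only [interactionEnergy_add_mul hφ hφC hφ_symm hu huC hv hvC]
  simpa using ((hasDerivAt_id' (x := (0 : ℝ))).mul_const _ |>.const_add _).fun_add
    ((hasDerivAt_pow 2 (0 : ℝ)).mul_const (interactionEnergy μ φ v))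

end Interaction

section InternalEnergy

variable {X : Type*} [TopologicalSpace X] [CompactSpace X] {f : X → ℝ → ℝ}

lemma exists_bound_of_continuous_uncurry (hf : Continuous (uncurry f)) (R : ℝ) :
    ∃ C, ∀ x s, |s| ≤ R → ‖f x s‖ ≤ C := by
  obtain ⟨C, hC⟩ := IsCompact.exists_bound_of_continuousOn
    (isCompact_univ.prod (isCompact_Icc (a := -R) (b := R))) hf.continuousOn
  exact ⟨C, fun x s hs => hC (x, s) ⟨mem_univ x, abs_le.1 hs⟩⟩

variable [MeasurableSpace X] [OpensMeasurableSpace X] {μ : Measure X} [IsFiniteMeasure μ]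
  {u v : X → ℝ} {Cu Cv : ℝ}

lemma integrable_comp_mul (hf : Continuous (uncurry f)) (hu : Measurable u)
    (huC : ∀ x, |u x| ≤ Cu) (hv : Measurable v) (hvC : ∀ x, |v x| ≤ Cv) :
    Integrable (fun x => f x (u x) * v x) μ := by
  obtain ⟨C, hC⟩ := exists_bound_of_continuous_uncurry hf Cu
  refine Integrable.of_bound ((hf.measurable.comp (measurable_id.prodMk hu)).mul
    hv).aestronglyMeasurable (C * Cv) (ae_of_all _ fun x => ?_)
  rw [norm_mul]
  exact mul_le_mul (hC x _ (huC x)) (hvC x) (norm_nonneg _) ((norm_nonneg _).trans (hC x _ (huC x)))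

theorem hasDerivAt_integral_primitive_add_mul (hf : Continuous (uncurry f)) (hu : Measurable u)
    (huC : ∀ x, |u x| ≤ Cu) (hv : Measurable v) (hvC : ∀ x, |v x| ≤ Cv) :
    HasDerivAt (fun t => ∫ x, (∫ s in (0 : ℝ)..(u x + t * v x), f x s) ∂μ)
      (∫ x, f x (u x) * v x ∂μ) 0 := by
  set F : X → ℝ → ℝ := fun x a => ∫ s in (0 : ℝ)..a, f x s
  have hF : Continuous (uncurry F) :=
    intervalIntegral.continuous_parametric_primitive_of_continuous hf
  have hline : ∀ t, Measurable fun x => u x + t * v x := fun t => hu.add (hv.const_mul t)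
  have hline_le : ∀ t ∈ Metric.ball (0 : ℝ) 1, ∀ x, |u x + t * v x| ≤ Cu + Cv := by
    intro t ht x
    rw [mem_ball_zero_iff, Real.norm_eq_abs] at ht
    calc |u x + t * v x| ≤ |u x| + |t| * |v x| := by rw [← abs_mul]; exact abs_add_le _ _
      _ ≤ Cu + 1 * Cv := by gcongr; exacts [huC x, hvC x]
      _ = Cu + Cv := by ring
  obtain ⟨CF, hCF⟩ := exists_bound_of_continuous_uncurry hF Cu
  obtain ⟨Cf, hCf⟩ := exists_bound_of_continuous_uncurry hf (Cu + Cv)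
  have key := hasDerivAt_integral_of_dominated_loc_of_deriv_le (μ := μ)
    (F := fun t x => F x (u x + t * v x)) (F' := fun t x => f x (u x + t * v x) * v x)
    (bound := fun _ => Cf * Cv) (Metric.ball_mem_nhds 0 one_pos)
    (.of_forall fun t => (hF.measurable.comp (measurable_id.prodMk (hline t))).aestronglyMeasurable)
    (Integrable.of_bound (hF.measurable.comp (measurable_id.prodMk (hline 0))).aestronglyMeasurable
      CF (ae_of_all _ fun x => hCF x _ (by simpa using huC x)))
    ((hf.measurable.comp (measurable_id.prodMk (hline 0))).mul hv).aestronglyMeasurable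
    (ae_of_all _ fun x t ht => by
      have hfx := hCf x _ (hline_le t ht x)
      rw [norm_mul]
      exact mul_le_mul hfx (hvC x) (norm_nonneg _) ((norm_nonneg _).trans hfx))
    (integrable_const _)
    (ae_of_all _ fun x t _ => by
      simpa [Function.comp_def] using
        ((hf.uncurry_left x).integral_hasStrictDerivAt 0 _).hasDerivAt.comp t
          (((hasDerivAt_id' t).mul_const (v x)).const_add (u x)))
  simpa using key.2

end InternalEnergy

lemma intervalIntegral.integral_comp_max_zero_of_nonneg {E : Type*} [NormedAddCommGroup E]
    [NormedSpace ℝ E] (g : ℝ → E) {a : ℝ} (ha : 0 ≤ a) :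
    ∫ s in (0 : ℝ)..a, g (max s 0) = ∫ s in (0 : ℝ)..a, g s :=
  intervalIntegral.integral_congr fun s hs => by
    rw [uIcc_of_le ha] at hs
    rw [max_eq_left hs.1]

theorem firstVariation_of_energy_general
    {X : Type*} [MetricSpace X] [CompactSpace X] [MeasurableSpace X] [BorelSpace X]
    (m0 : Measure X) [IsProbabilityMeasure m0]
    (f : X → ℝ → ℝ)
    (hf : ContinuousOn (fun p : X × ℝ => f p.1 p.2) (Set.univ ×ˢ Set.Ici 0))
    (φ : X → X → ℝ) (hφ : Continuous fun p : X × X => φ p.1 p.2)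
    (hφ_symm : ∀ x y : X, φ x y = φ y x)
    (ρ ρ' : X → ℝ) (hρ_meas : Measurable ρ) (hρ'_meas : Measurable ρ')
    (hρ_nonneg : ∀ x, 0 ≤ ρ x) (hρ'_nonneg : ∀ x, 0 ≤ ρ' x)
    (hρ_bdd : ∃ M : ℝ, ∀ x, ρ x ≤ M) (hρ'_bdd : ∃ M : ℝ, ∀ x, ρ' x ≤ M) :
    HasDerivWithinAt
      (fun t : ℝ =>
        (∫ x, (∫ s in (0:ℝ)..(ρ x + t * (ρ' x - ρ x)), f x s) ∂m0) +
          (1 / 2) * ∫ x, (∫ y, φ x y * (ρ y + t * (ρ' y - ρ y)) ∂m0) *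
            (ρ x + t * (ρ' x - ρ x)) ∂m0)
      (∫ x, (f x (ρ x) + ∫ y, φ x y * ρ y ∂m0) * (ρ' x - ρ x) ∂m0)
      (Set.Ici 0) 0 := by
  obtain ⟨M, hM⟩ := hρ_bdd
  obtain ⟨M', hM'⟩ := hρ'_bdd
  have hρC : ∀ x, |ρ x| ≤ M := fun x => (abs_of_nonneg (hρ_nonneg x)).trans_le (hM x)
  have hσ : Measurable fun x => ρ' x - ρ x := hρ'_meas.sub hρ_meas
  have hσC : ∀ x, |ρ' x - ρ x| ≤ M' + M := fun x => (abs_sub _ _).trans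
    (add_le_add ((abs_of_nonneg (hρ'_nonneg x)).trans_le (hM' x)) (hρC x))
  obtain ⟨Cφ, hCφ⟩ := isCompact_univ.exists_bound_of_continuousOn hφ.continuousOn
  have hφC : ∀ x y, |φ x y| ≤ Cφ := fun x y => hCφ (x, y) (mem_univ _)
  set fExt : X → ℝ → ℝ := fun x s => f x (max s 0)
  have hfExt : Continuous (uncurry fExt) :=
    hf.comp_continuous (continuous_fst.prodMk (continuous_snd.max continuous_const))
      fun p => ⟨mem_univ _, mem_Ici.2 (le_max_right p.2 0)⟩
  have hinternal := hasDerivAt_integral_primitive_add_mul (μ := m0) hfExt hρ_meas hρC hσ hσC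
  have hinteraction := hasDerivAt_interactionEnergy_add_mul (μ := m0) hφ.stronglyMeasurable hφC
    hφ_symm hρ_meas hρC hσ hσC
  have hderiv : ∫ x, (f x (ρ x) + ∫ y, φ x y * ρ y ∂m0) * (ρ' x - ρ x) ∂m0
      = ∫ x, fExt x (ρ x) * (ρ' x - ρ x) ∂m0
        + 1 / 2 * (2 * ∫ x, (∫ y, φ x y * ρ y ∂m0) * (ρ' x - ρ x) ∂m0) := by
    have hfExt_ρ : ∀ x, fExt x (ρ x) = f x (ρ x) := fun x => by
      simp only [fExt, max_eq_left (hρ_nonneg x)]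
    have hfρ : Integrable (fun x => f x (ρ x) * (ρ' x - ρ x)) m0 := by
      simpa only [hfExt_ρ] using integrable_comp_mul (μ := m0) hfExt hρ_meas hρC hσ hσC
    simp only [hfExt_ρ, add_mul]
    rw [integral_add hfρ (integrable_potential_mul hφ.stronglyMeasurable hφC hρ_meas hρC hσ hσC)]
    ring
  have hagree : ∀ t ∈ Icc (0 : ℝ) 1,
      (∫ x, (∫ s in (0:ℝ)..(ρ x + t * (ρ' x - ρ x)), f x s) ∂m0)
        = ∫ x, (∫ s in (0:ℝ)..(ρ x + t * (ρ' x - ρ x)), fExt x s) ∂m0 := by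
    intro t ht
    refine integral_congr_ae (ae_of_all _ fun x => ?_)
    have hν : 0 ≤ ρ x + t * (ρ' x - ρ x) := by
      nlinarith [mul_nonneg (sub_nonneg.2 ht.2) (hρ_nonneg x), mul_nonneg ht.1 (hρ'_nonneg x)]
    exact (intervalIntegral.integral_comp_max_zero_of_nonneg (f x) hν).symm
  rw [hderiv]
  refine (hinternal.add (hinteraction.const_mul (1 / 2))).hasDerivWithinAt.congr_of_eventuallyEq
    (Filter.eventually_of_mem (Icc_mem_nhdsGE one_pos) fun t ht => ?_) ?_
  · simp only [hagree t ht]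
    rfl
  · simp only [hagree 0 ⟨le_rfl, zero_le_one⟩]
    rfl

/-- **`V(ν,·)` is the first variation of the energy `J` at `ν`.**
Densities w.r.t. the reference measure `m₀` are denoted `ρ, ρ'` (bounded, nonnegative,
integrating to `1`).  With `F(x,t) = ∫₀ᵗ f(x,s) ds`,
`J(ν) = ∫ F(x, ν(x)) dm₀ + (1/2) ∫∫ φ(x,y) ν(dx) ν(dy)` and
`V(ν,x) = f(x, ν(x)) + ∫ φ(x,y) ν(dy)`, the map `t ↦ J(ν + t(ν'-ν))` is
right-differentiable at `t = 0` with derivative `∫ V(ν,x) (ν'-ν)(dx)`. -/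
theorem firstVariation_of_energy
    {X : Type*} [MetricSpace X] [CompactSpace X] [MeasurableSpace X] [BorelSpace X]
    (m0 : Measure X) [IsProbabilityMeasure m0]
    (f : X → ℝ → ℝ)
    (hf : ContinuousOn (fun p : X × ℝ => f p.1 p.2) (Set.univ ×ˢ Set.Ici 0))
    (hf_mono : ∀ x : X, MonotoneOn (f x) (Set.Ici 0))
    (φ : X → X → ℝ) (hφ : Continuous fun p : X × X => φ p.1 p.2)
    (hφ_symm : ∀ x y : X, φ x y = φ y x)
    (ρ ρ' : X → ℝ) (hρ_meas : Measurable ρ) (hρ'_meas : Measurable ρ')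
    (hρ_nonneg : ∀ x, 0 ≤ ρ x) (hρ'_nonneg : ∀ x, 0 ≤ ρ' x)
    (hρ_bdd : ∃ M : ℝ, ∀ x, ρ x ≤ M) (hρ'_bdd : ∃ M : ℝ, ∀ x, ρ' x ≤ M)
    (hρ_one : ∫ x, ρ x ∂m0 = 1) (hρ'_one : ∫ x, ρ' x ∂m0 = 1) :
    HasDerivWithinAt
      (fun t : ℝ =>
        (∫ x, (∫ s in (0:ℝ)..(ρ x + t * (ρ' x - ρ x)), f x s) ∂m0) +
          (1 / 2) * ∫ x, (∫ y, φ x y * (ρ y + t * (ρ' y - ρ y)) ∂m0) *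
            (ρ x + t * (ρ' x - ρ x)) ∂m0)
      (∫ x, (f x (ρ x) + ∫ y, φ x y * ρ y ∂m0) * (ρ' x - ρ x) ∂m0)
      (Set.Ici 0) 0 :=
  firstVariation_of_energy_general m0 f hf φ hφ hφ_symm ρ ρ' hρ_meas hρ'_meas hρ_nonneg hρ'_nonneg
    hρ_bdd hρ'_bdd
end
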